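/- arXiv:1701.02302 — 11 statements merged into one kernel-verified Lean document; each statement's English description precedes it below -/
import Mathlib

section
/- Let n, m ≥ 1 and let C be a class of functions [n] → [m]. Call a set σ ⊆ [n] × [m] a face of C if σ is contained in the graph of some member of C, and a nonface otherwise. Then σ is a minimal nonface of C (i.e., σ is a nonface and every proper subset of σ is a face) if and only if either (i) σ = {(u,i),(u,j)} for some u ∈ [n] and distinct i, j ∈ [m] such that some member of C takes the value i at u and some member of C takes the value j at u, or (ii) σ is the graph of an extenture of C. (Equivalently, the Stanley–Reisner ideal of C is minimally generated by the functional monomials x_{u,i}x_{u,j} with both values attained in C together with the monomials x^{graph 𝕡f} for extentures 𝕡f of C.) -/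
/-- A total function `f : Fin n → Fin m` extends the partial function `pf`
(represented as `Fin n → Option (Fin m)`). -/
def ExtendsPF {n m : ℕ} (f : Fin n → Fin m) (pf : Fin n → Option (Fin m)) : Prop :=
  ∀ u i, pf u = some i → f u = i

/-- `pf` is an extenture of `C`: no member of `C` extends `pf`, but every proper
restriction of `pf` has an extension in `C`. -/
def IsExtenture {n m : ℕ} (C : Set (Fin n → Fin m)) (pf : Fin n → Option (Fin m)) : Prop :=
  (¬ ∃ f ∈ C, ExtendsPF f pf) ∧
  ∀ pg : Fin n → Option (Fin m),
    (∀ u i, pg u = some i → pf u = some i) → pg ≠ pf → ∃ f ∈ C, ExtendsPF f pg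

/-- The graph of a partial function. -/
def graphPF {n m : ℕ} (pf : Fin n → Option (Fin m)) : Set (Fin n × Fin m) :=
  {p | pf p.1 = some p.2}

/-- `σ` is a face of `C` if it is contained in the graph of some member of `C`. -/
def IsFace {n m : ℕ} (C : Set (Fin n → Fin m)) (σ : Set (Fin n × Fin m)) : Prop :=
  ∃ f ∈ C, ∀ p ∈ σ, f p.1 = p.2

def IsFunctionalRel {n m : ℕ} (σ : Set (Fin n × Fin m)) : Prop :=
  ∀ u i j, (u, i) ∈ σ → (u, j) ∈ σ → i = j

def IsMinimalNonface {n m : ℕ} (C : Set (Fin n → Fin m)) (σ : Set (Fin n × Fin m)) : Prop :=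
  ¬ IsFace C σ ∧ ∀ τ, τ ⊂ σ → IsFace C τ

section

variable {n m : ℕ} {C : Set (Fin n → Fin m)}

theorem IsFace.mono {σ τ : Set (Fin n × Fin m)} (h : IsFace C σ) (hτ : τ ⊆ σ) : IsFace C τ :=
  let ⟨f, hf, hσ⟩ := h
  ⟨f, hf, fun p hp => hσ p (hτ hp)⟩

theorem isFace_singleton_iff {u : Fin n} {i : Fin m} :
    IsFace C {(u, i)} ↔ ∃ f ∈ C, f u = i := by
  simp [IsFace]

theorem not_isFace_pair {u : Fin n} {i j : Fin m} (hij : i ≠ j) :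
    ¬ IsFace C {(u, i), (u, j)} := by
  rintro ⟨f, -, hf⟩
  exact hij ((hf (u, i) (by simp)).symm.trans (hf (u, j) (by simp)))

theorem isFace_graphPF_iff {pf : Fin n → Option (Fin m)} :
    IsFace C (graphPF pf) ↔ ∃ f ∈ C, ExtendsPF f pf :=
  ⟨fun ⟨f, hf, h⟩ => ⟨f, hf, fun u i hi => h (u, i) hi⟩,
    fun ⟨f, hf, h⟩ => ⟨f, hf, fun p hp => h p.1 p.2 hp⟩⟩

theorem graphPF_subset_graphPF_iff {pf pg : Fin n → Option (Fin m)} :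
    graphPF pg ⊆ graphPF pf ↔ ∀ u i, pg u = some i → pf u = some i :=
  ⟨fun h u i hi => h (a := (u, i)) hi, fun h p hp => h p.1 p.2 hp⟩

theorem graphPF_injective : Function.Injective (graphPF (n := n) (m := m)) := by
  intro pf pg h
  funext u
  apply Option.ext
  intro i
  exact Set.ext_iff.mp h (u, i)

theorem isFunctionalRel_graphPF (pf : Fin n → Option (Fin m)) : IsFunctionalRel (graphPF pf) :=
  fun _ _ _ hi hj => Option.some_injective _ (hi.symm.trans hj)

theorem IsFunctionalRel.mono {σ τ : Set (Fin n × Fin m)} (h : IsFunctionalRel σ) (hτ : τ ⊆ σ) :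
    IsFunctionalRel τ :=
  fun u i j hi hj => h u i j (hτ hi) (hτ hj)

theorem IsFunctionalRel.exists_graphPF_eq {σ : Set (Fin n × Fin m)} (h : IsFunctionalRel σ) :
    ∃ pf, graphPF pf = σ := by
  classical
  refine ⟨fun u => if hu : ∃ i, (u, i) ∈ σ then some hu.choose else none, ?_⟩
  ext ⟨u, i⟩
  by_cases hu : ∃ i, (u, i) ∈ σ
  · simp only [graphPF, Set.mem_ofPred_eq, dif_pos hu, Option.some.injEq]
    exact ⟨fun h' => h' ▸ hu.choose_spec, fun hi => h u _ _ hu.choose_spec hi⟩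
  · simp only [graphPF, Set.mem_ofPred_eq, dif_neg hu, reduceCtorEq, false_iff]
    exact fun hi => hu ⟨i, hi⟩

/-- Proper subsets of the graph of `pf` are exactly the graphs of proper restrictions of `pf`. -/
theorem isMinimalNonface_graphPF_iff {pf : Fin n → Option (Fin m)} :
    IsMinimalNonface C (graphPF pf) ↔ IsExtenture C pf := by
  refine and_congr isFace_graphPF_iff.not ⟨fun hmin pg hle hne => ?_, fun hres τ hτ => ?_⟩
  · refine isFace_graphPF_iff.mp (hmin _ (Set.ssubset_iff_subset_ne.mpr ⟨?_, ?_⟩))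
    exacts [graphPF_subset_graphPF_iff.mpr hle, graphPF_injective.ne hne]
  · obtain ⟨pg, rfl⟩ := ((isFunctionalRel_graphPF pf).mono hτ.1).exists_graphPF_eq
    obtain ⟨hle, hne⟩ := Set.ssubset_iff_subset_ne.mp hτ
    exact isFace_graphPF_iff.mpr
      (hres pg (graphPF_subset_graphPF_iff.mp hle) (mt (congrArg graphPF) hne))

theorem isMinimalNonface_pair_iff {u : Fin n} {i j : Fin m} (hij : i ≠ j) :
    IsMinimalNonface C {(u, i), (u, j)} ↔ (∃ f ∈ C, f u = i) ∧ (∃ g ∈ C, g u = j) := by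
  refine ⟨fun ⟨_, hmin⟩ => ⟨?_, ?_⟩, fun ⟨hi, hj⟩ => ⟨not_isFace_pair hij, fun τ hτ => ?_⟩⟩
  · refine isFace_singleton_iff.mp (hmin _ (Set.ssubset_iff_subset_ne.mpr ⟨by simp, ?_⟩))
    simpa [Set.ext_iff] using hij.symm
  · refine isFace_singleton_iff.mp (hmin _ (Set.ssubset_iff_subset_ne.mpr ⟨by simp, ?_⟩))
    simpa [Set.ext_iff] using hij
  · -- a proper subset of the pair misses one of its two points
    by_cases hτi : (u, i) ∈ τ
    · have hτj : (u, j) ∉ τ := fun hτj => hτ.2 (Set.insert_subset hτi (by simpa using hτj))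
      refine (isFace_singleton_iff.mpr hi).mono fun p hp => ?_
      rcases hτ.1 hp with rfl | rfl
      exacts [rfl, absurd hp hτj]
    · refine (isFace_singleton_iff.mpr hj).mono fun p hp => ?_
      rcases hτ.1 hp with rfl | rfl
      exacts [absurd hp hτi, rfl]

/-- A non-functional set contains a nonface pair, so if it is a minimal nonface it is that pair. -/
theorem IsMinimalNonface.eq_pair_of_not_isFunctionalRel {σ : Set (Fin n × Fin m)}
    (hσ : IsMinimalNonface C σ) (hfun : ¬ IsFunctionalRel σ) :
    ∃ u i j, i ≠ j ∧ σ = {(u, i), (u, j)} := by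
  simp only [IsFunctionalRel, not_forall] at hfun
  obtain ⟨u, i, j, hi, hj, hij⟩ := hfun
  have hpair : {(u, i), (u, j)} ⊆ σ := Set.insert_subset hi (Set.singleton_subset_iff.mpr hj)
  exact ⟨u, i, j, hij, (hpair.eq_of_not_ssubset fun hss => not_isFace_pair hij (hσ.2 _ hss)).symm⟩

end

theorem minimal_nonface_characterization_general {n m : ℕ}
    (C : Set (Fin n → Fin m)) (σ : Set (Fin n × Fin m)) :
    (¬ IsFace C σ ∧ ∀ τ : Set (Fin n × Fin m), τ ⊂ σ → IsFace C τ) ↔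
      ((∃ u : Fin n, ∃ i j : Fin m, i ≠ j ∧ σ = {(u, i), (u, j)} ∧
          (∃ f ∈ C, f u = i) ∧ (∃ g ∈ C, g u = j)) ∨
        (∃ pf : Fin n → Option (Fin m), IsExtenture C pf ∧ σ = graphPF pf)) := by
  change IsMinimalNonface C σ ↔ _
  constructor
  · intro hσ
    by_cases hfun : IsFunctionalRel σ
    · obtain ⟨pf, rfl⟩ := hfun.exists_graphPF_eq
      exact Or.inr ⟨pf, isMinimalNonface_graphPF_iff.mp hσ, rfl⟩
    · obtain ⟨u, i, j, hij, rfl⟩ := hσ.eq_pair_of_not_isFunctionalRel hfun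
      exact Or.inl ⟨u, i, j, hij, rfl, (isMinimalNonface_pair_iff hij).mp hσ⟩
  · rintro (⟨u, i, j, hij, rfl, hvals⟩ | ⟨pf, hpf, rfl⟩)
    · exact (isMinimalNonface_pair_iff hij).mpr hvals
    · exact isMinimalNonface_graphPF_iff.mpr hpf

/-- A subset `σ ⊆ [n] × [m]` is a minimal nonface of a class `C` iff it is either a
functional pair `{(u,i),(u,j)}` with both values attained in `C`, or the graph of an
extenture of `C`. -/
theorem minimal_nonface_characterization {n m : ℕ} (hn : 1 ≤ n) (hm : 1 ≤ m)
    (C : Set (Fin n → Fin m)) (σ : Set (Fin n × Fin m)) :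
    (¬ IsFace C σ ∧ ∀ τ : Set (Fin n × Fin m), τ ⊂ σ → IsFace C τ) ↔
      ((∃ u : Fin n, ∃ i j : Fin m, i ≠ j ∧ σ = {(u, i), (u, j)} ∧
          (∃ f ∈ C, f u = i) ∧ (∃ g ∈ C, g u = j)) ∨
        (∃ pf : Fin n → Option (Fin m), IsExtenture C pf ∧ σ = graphPF pf)) :=
  minimal_nonface_characterization_general C σ
end

section
/- Let n, m ≥ 1 and let ℱ be a set of partial functions from [n] to [m] forming an antichain under extension (no member of ℱ properly extends another). Call a partial function free if it does not extend any member of ℱ. Then the following are equivalent: (A) every free partial function has a free total extension (equivalently, the monomial ideal generated by the graphs of the members of ℱ together with the appropriate functional monomials is the Stanley–Reisner ideal of a class of total functions); (B) for every u ∈ [n] and every subset F ⊆ ℱ all of whose members are defined at u and such that {𝕡f(u) : 𝕡f ∈ F} is all of [m], either there exist 𝕡f, 𝕡g ∈ F and some v ≠ u at which both are defined with 𝕡f(v) ≠ 𝕡g(v), or the union ⋃_{𝕡f ∈ F} 𝕡f|_{dom(𝕡f)∖{u}} is a well-defined (single-valued) partial function that extends some member of ℱ. -/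
/-- The partial function `pg` extends the partial function `pf`
(partial functions from `Fin n` to `Fin m` are represented as `Fin n → Option (Fin m)`). -/
def PFExtends {n m : ℕ} (pg pf : Fin n → Option (Fin m)) : Prop :=
  ∀ u i, pf u = some i → pg u = some i

/-- A partial function is free (w.r.t. the family `ℱ`) if it does not extend
any member of `ℱ`. -/
def FreePF {n m : ℕ} (ℱ : Set (Fin n → Option (Fin m))) (pf : Fin n → Option (Fin m)) : Prop :=
  ¬ ∃ pg ∈ ℱ, PFExtends pf pg

/-!
Both conditions are equivalent to the one-point extension property: every free partial function
`p` and every point `u` admit a free extension of `p` defined at `u`. Iterating it over the points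
gives (A); conversely a free total extension is such an extension. The link with (B) is a
single step at `u`: if every value `a` at `u` makes `p` non-free, choose for each `a` a member of
`ℱ` witnessing this; these members form a family `F` covering all values at `u` and agreeing with
`p` off `u`, so (B) for `F` yields a member of `ℱ` below `p`. Conversely, for a covering
family `F` without conflicts off `u`, the union of the restrictions is not free, since a free
extension of it defined at `u` would extend the member of `F` taking the same value at `u`.
-/

variable {n m : ℕ}

lemma exists_eq_some_iff_of_functional {α β : Type*} (R : α → β → Prop)
    (hR : ∀ a b b', R a b → R a b' → b = b') :
    ∃ p : α → Option β, ∀ a b, p a = some b ↔ R a b := by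
  classical
  refine ⟨fun a => if h : ∃ b, R a b then some h.choose else none, fun a b => ?_⟩
  by_cases h : ∃ b, R a b
  · simp only [dif_pos h, Option.some.injEq]
    exact ⟨fun hb => hb ▸ h.choose_spec, hR a _ _ h.choose_spec⟩
  · simp only [dif_neg h, reduceCtorEq, false_iff]
    exact fun hb => h ⟨b, hb⟩

namespace PFExtends

lemma refl (p : Fin n → Option (Fin m)) : PFExtends p p := fun _ _ h => h

lemma trans {p q r : Fin n → Option (Fin m)} (hpq : PFExtends p q) (hqr : PFExtends q r) :
    PFExtends p r :=
  fun u i hi => hpq u i (hqr u i hi)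

lemma ne_none {p q : Fin n → Option (Fin m)} (hpq : PFExtends p q) {u : Fin n}
    (hq : q u ≠ none) : p u ≠ none := by
  obtain ⟨a, ha⟩ := Option.ne_none_iff_exists'.mp hq
  simp [hpq u a ha]

end PFExtends

def HasFreeTotalExtensions (ℱ : Set (Fin n → Option (Fin m))) : Prop :=
  ∀ pf : Fin n → Option (Fin m), FreePF ℱ pf →
    ∃ f : Fin n → Fin m, PFExtends (fun u => some (f u)) pf ∧ FreePF ℱ (fun u => some (f u))

def HasFreePointExtensions (ℱ : Set (Fin n → Option (Fin m))) : Prop :=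
  ∀ p : Fin n → Option (Fin m), FreePF ℱ p → ∀ u : Fin n,
    ∃ q, PFExtends q p ∧ q u ≠ none ∧ FreePF ℱ q

/-- Condition (B). -/
def StarCondition (ℱ : Set (Fin n → Option (Fin m))) : Prop :=
  ∀ u : Fin n, ∀ F ⊆ ℱ,
    (∀ pf ∈ F, pf u ≠ none) →
    (∀ v : Fin m, ∃ pf ∈ F, pf u = some v) →
    ((∃ pf ∈ F, ∃ pg ∈ F, ∃ v : Fin n, v ≠ u ∧
        ∃ a b : Fin m, pf v = some a ∧ pg v = some b ∧ a ≠ b) ∨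
      (∃ pU : Fin n → Option (Fin m),
        (∀ v : Fin n, ∀ a : Fin m,
          pU v = some a ↔ (v ≠ u ∧ ∃ pf ∈ F, pf v = some a)) ∧
        ∃ ph ∈ ℱ, PFExtends pU ph))

variable {ℱ : Set (Fin n → Option (Fin m))}

lemma HasFreeTotalExtensions.hasFreePointExtensions (hT : HasFreeTotalExtensions ℱ) :
    HasFreePointExtensions ℱ := fun p hp _ =>
  let ⟨_, hfp, hf⟩ := hT p hp
  ⟨_, hfp, Option.some_ne_none _, hf⟩

lemma HasFreePointExtensions.exists_extension_definedOn (hP : HasFreePointExtensions ℱ)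
    (s : Finset (Fin n)) {p : Fin n → Option (Fin m)} (hp : FreePF ℱ p) :
    ∃ q, PFExtends q p ∧ (∀ u ∈ s, q u ≠ none) ∧ FreePF ℱ q := by
  induction s using Finset.induction_on with
  | empty => exact ⟨p, .refl p, by simp, hp⟩
  | insert u s _ ih =>
    obtain ⟨q, hqp, hqs, hq⟩ := ih
    obtain ⟨r, hrq, hru, hr⟩ := hP q hq u
    exact ⟨r, hrq.trans hqp, Finset.forall_mem_insert .. |>.mpr
      ⟨hru, fun v hv => hrq.ne_none (hqs v hv)⟩, hr⟩

lemma HasFreePointExtensions.hasFreeTotalExtensions (hP : HasFreePointExtensions ℱ) :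
    HasFreeTotalExtensions ℱ := by
  intro p hp
  obtain ⟨q, hqp, hq_def, hq⟩ := hP.exists_extension_definedOn Finset.univ hp
  choose f hf using fun u => Option.ne_none_iff_exists'.mp (hq_def u (Finset.mem_univ u))
  obtain rfl : q = fun u => some (f u) := funext hf
  exact ⟨f, hqp, hq⟩

lemma HasFreePointExtensions.starCondition (hP : HasFreePointExtensions ℱ) :
    StarCondition ℱ := by
  intro u F hFℱ _ hcover
  refine or_iff_not_imp_left.mpr fun hconflict => ?_
  push Not at hconflict
  obtain ⟨pU, hpU⟩ :=
    exists_eq_some_iff_of_functional (fun v a => v ≠ u ∧ ∃ pf ∈ F, pf v = some a)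
    fun v a b ⟨hvu, pf, hpf, ha⟩ ⟨_, pg, hpg, hb⟩ => hconflict pf hpf pg hpg v hvu a b ha hb
  refine ⟨pU, hpU, not_not.mp fun hU => ?_⟩
  obtain ⟨q, hqU, hqu, hq⟩ := hP pU hU u
  obtain ⟨a, hqa⟩ := Option.ne_none_iff_exists'.mp hqu
  obtain ⟨pf, hpf, hpfu⟩ := hcover a
  refine hq ⟨pf, hFℱ hpf, fun v b hb => ?_⟩
  by_cases hvu : v = u
  · subst hvu
    rwa [← Option.some_injective _ (hpfu.symm.trans hb)]
  · exact hqU v b ((hpU v b).mpr ⟨hvu, pf, hpf, hb⟩)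

lemma StarCondition.exists_freePF_update (hB : StarCondition ℱ) {p : Fin n → Option (Fin m)}
    (hp : FreePF ℱ p) (u : Fin n) : ∃ a, FreePF ℱ (Function.update p u (some a)) := by
  by_contra! h
  simp only [FreePF, not_not] at h
  choose g hgℱ hg using h
  have below_p_off_u : ∀ a v b, v ≠ u → g a v = some b → p v = some b :=
    fun a v b hvu hb => by simpa [Function.update_of_ne hvu] using hg a v b hb
  have hgu : ∀ a, g a u = some a := fun a => by
    cases hgau : g a u with
    | none =>
      refine absurd ⟨g a, hgℱ a, fun v b hb => below_p_off_u a v b ?_ hb⟩ hp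
      rintro rfl
      simp [hgau] at hb
    | some b => simpa using (hg a u b hgau).symm
  rcases hB u (Set.range g) (Set.range_subset_iff.mpr hgℱ) (by simp [hgu])
      (fun a => ⟨g a, ⟨a, rfl⟩, hgu a⟩) with
    ⟨_, ⟨a, rfl⟩, _, ⟨a', rfl⟩, v, hvu, b, b', hb, hb', hne⟩ | ⟨pU, hpU, ph, hph, hUh⟩
  · exact hne (Option.some_injective _ <|
      (below_p_off_u a v b hvu hb).symm.trans (below_p_off_u a' v b' hvu hb'))
  · refine hp ⟨ph, hph, PFExtends.trans (fun v b hb => ?_) hUh⟩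
    obtain ⟨hvu, _, ⟨a, rfl⟩, hgb⟩ := (hpU v b).mp hb
    exact below_p_off_u a v b hvu hgb

lemma StarCondition.hasFreePointExtensions (hB : StarCondition ℱ) :
    HasFreePointExtensions ℱ := by
  intro p hp u
  cases hpu : p u with
  | some _ => exact ⟨p, .refl p, by simp [hpu], hp⟩
  | none =>
    obtain ⟨a, ha⟩ := hB.exists_freePF_update hp u
    refine ⟨_, fun v b hb => ?_, by simp, ha⟩
    rwa [Function.update_of_ne (by rintro rfl; simp [hpu] at hb)]

theorem SR_ideal_of_total_class_characterization_general {n m : ℕ}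
    (ℱ : Set (Fin n → Option (Fin m))) :
    (∀ pf : Fin n → Option (Fin m), FreePF ℱ pf →
        ∃ f : Fin n → Fin m, PFExtends (fun u => some (f u)) pf ∧
          FreePF ℱ (fun u => some (f u))) ↔
      (∀ u : Fin n, ∀ F ⊆ ℱ,
        (∀ pf ∈ F, pf u ≠ none) →
        (∀ v : Fin m, ∃ pf ∈ F, pf u = some v) →
        ((∃ pf ∈ F, ∃ pg ∈ F, ∃ v : Fin n, v ≠ u ∧
            ∃ a b : Fin m, pf v = some a ∧ pg v = some b ∧ a ≠ b) ∨
          (∃ pU : Fin n → Option (Fin m),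
            (∀ v : Fin n, ∀ a : Fin m,
              pU v = some a ↔ (v ≠ u ∧ ∃ pf ∈ F, pf v = some a)) ∧
            ∃ ph ∈ ℱ, PFExtends pU ph))) :=
  show HasFreeTotalExtensions ℱ ↔ StarCondition ℱ from
    ⟨fun hT => hT.hasFreePointExtensions.starCondition,
      fun hB => hB.hasFreePointExtensions.hasFreeTotalExtensions⟩

/-- For an antichain `ℱ` of partial functions from `[n]` to `[m]`:
every free partial function has a free total extension iff the combinatorial
condition (⋆) on subsets `F ⊆ ℱ` hitting all values at a point `u` holds. -/
theorem SR_ideal_of_total_class_characterization {n m : ℕ} (hn : 1 ≤ n) (hm : 1 ≤ m)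
    (ℱ : Set (Fin n → Option (Fin m)))
    (hanti : ∀ pf ∈ ℱ, ∀ pg ∈ ℱ, PFExtends pf pg → pf = pg) :
    (∀ pf : Fin n → Option (Fin m), FreePF ℱ pf →
        ∃ f : Fin n → Fin m, PFExtends (fun u => some (f u)) pf ∧
          FreePF ℱ (fun u => some (f u))) ↔
      (∀ u : Fin n, ∀ F ⊆ ℱ,
        (∀ pf ∈ F, pf u ≠ none) →
        (∀ v : Fin m, ∃ pf ∈ F, pf u = some v) →
        ((∃ pf ∈ F, ∃ pg ∈ F, ∃ v : Fin n, v ≠ u ∧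
            ∃ a b : Fin m, pf v = some a ∧ pg v = some b ∧ a ≠ b) ∨
          (∃ pU : Fin n → Option (Fin m),
            (∀ v : Fin n, ∀ a : Fin m,
              pU v = some a ↔ (v ≠ u ∧ ∃ pf ∈ F, pf v = some a)) ∧
            ∃ ph ∈ ℱ, PFExtends pU ph))) :=
  SR_ideal_of_total_class_characterization_general ℱ
end

section
/- Let 𝕜 be a field, n ≥ 1, and let C be a class of functions [n] → [2]. Let S = 𝕜[x_{u,i} : u ∈ [n], i ∈ [2]] and S' = 𝕜[x_u : u ∈ [n]] (in Lean: MvPolynomial (Fin n × Fin 2) 𝕜 and MvPolynomial (Fin n) 𝕜), and let π : S → S' be the 𝕜-algebra homomorphism with π(x_{u,i}) = x_u (MvPolynomial.rename along the projection (u,i) ↦ u). Let I_C ⊆ S be the Stanley–Reisner ideal of C: the ideal generated by the squarefree monomials ∏_{(u,i) ∈ σ} x_{u,i} over all finite sets σ ⊆ [n] × [2] that are not contained in the graph of any member of C. Then for every subset U ⊆ [n]: C shatters U if and only if the monomial ∏_{u ∈ U} x_u does not belong to the image ideal Ideal.map π I_C. -/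
/-!
Collapsing `x_{u,i} ↦ x_u` sends the generator `∏_{p ∈ σ} x_p` of the Stanley–Reisner ideal to
the monomial with exponent `∑_{p ∈ σ} e_{p.1}`, so the collapsed ideal is again a monomial ideal.
Hence `∏_{u ∈ U} x_u` lies in it iff some non-face `σ` has exponent `≤ ∑_{u ∈ U} e_u`, i.e. iff
some non-face `σ` is contained in the graph over `U` of some `g : [n] → [2]`. No such `σ` exists
exactly when every `g` agrees on `U` with a member of `C`.
-/

open MvPolynomial

/-- `C` shatters `U`: every assignment of values on `U` is realized by a member of `C`. -/
def Shatters {n : ℕ} (C : Set (Fin n → Fin 2)) (U : Finset (Fin n)) : Prop :=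
  ∀ g : Fin n → Fin 2, ∃ f ∈ C, ∀ u ∈ U, f u = g u

/-- The Stanley–Reisner ideal of the class `C`: the ideal generated by the squarefree
monomials `∏_{(u,i) ∈ σ} x_{u,i}` over all finite `σ ⊆ [n] × [2]` not contained in the
graph of any member of `C`. -/
noncomputable def SRIdeal (𝕜 : Type) [Field 𝕜] {n : ℕ} (C : Set (Fin n → Fin 2)) :
    Ideal (MvPolynomial (Fin n × Fin 2) 𝕜) :=
  Ideal.span {P | ∃ σ : Finset (Fin n × Fin 2),
    (¬ ∃ f ∈ C, ∀ p ∈ σ, f p.1 = p.2) ∧ P = ∏ p ∈ σ, X p}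

open Finsupp

section Monomials

variable {σ τ R : Type*} [CommSemiring R]

theorem MvPolynomial.prod_X_eq_monomial (s : Finset σ) :
    ∏ i ∈ s, (X i : MvPolynomial σ R) = monomial (∑ i ∈ s, single i 1) 1 := by
  rw [monomial_sum_one]
  rfl

theorem MvPolynomial.rename_prod_X (f : σ → τ) (s : Finset σ) :
    rename f (∏ i ∈ s, (X i : MvPolynomial σ R)) = monomial (∑ i ∈ s, single (f i) 1) 1 := by
  rw [map_prod, monomial_sum_one]
  simp only [rename_X]
  rfl

theorem MvPolynomial.map_rename_span_prod_X (f : σ → τ) (S : Set (Finset σ)) :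
    Ideal.map (rename f : MvPolynomial σ R →ₐ[R] MvPolynomial τ R)
        (Ideal.span ((fun s => ∏ i ∈ s, X i) '' S)) =
      Ideal.span ((fun d => monomial d 1) '' ((fun s => ∑ i ∈ s, single (f i) 1) '' S)) := by
  rw [Ideal.map_span, Set.image_image, Set.image_image]
  simp only [rename_prod_X]

end Monomials

section Graphs

variable {ι α : Type*}

theorem Finsupp.toMultiset_sum_single_fst (s : Finset (ι × α)) :
    toMultiset (∑ p ∈ s, single p.1 1) = s.val.map Prod.fst := by
  rw [map_sum, Finset.sum_eq_multiset_sum, ← Multiset.sum_map_singleton (s.val.map Prod.fst),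
    Multiset.map_map]
  simp only [toMultiset_single, one_smul, Function.comp_def]

theorem Finsupp.toMultiset_le_toMultiset {f g : ι →₀ ℕ} : toMultiset f ≤ toMultiset g ↔ f ≤ g := by
  classical
  exact orderIsoMultiset.le_iff_le

theorem Set.InjOn.exists_graph_eq [Nonempty α] {s : Set (ι × α)} (hs : s.InjOn Prod.fst) :
    ∃ g : ι → α, ∀ p ∈ s, g p.1 = p.2 := by
  have hinj : Function.Injective fun p : s => p.1.1 :=
    fun p q hpq => Subtype.ext (hs p.2 q.2 hpq)
  exact ⟨Function.extend (fun p : s => p.1.1) (fun p => p.1.2) fun _ => Classical.arbitrary α,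
    fun p hp => hinj.extend_apply _ _ ⟨p, hp⟩⟩

theorem Finsupp.sum_single_fst_le_sum_single_iff [Nonempty α] {s : Finset (ι × α)} {U : Finset ι} :
    ∑ p ∈ s, single p.1 1 ≤ ∑ u ∈ U, single u 1 ↔
      ∃ g : ι → α, ∀ p ∈ s, p.1 ∈ U ∧ g p.1 = p.2 := by
  rw [← toMultiset_le_toMultiset, toMultiset_sum_single_fst, toMultiset_sum_single, one_smul]
  constructor
  · intro hle
    have hinj : (s : Set (ι × α)).InjOn Prod.fst :=
      Multiset.inj_on_of_nodup_map (Multiset.nodup_of_le hle U.nodup)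
    obtain ⟨g, hg⟩ := hinj.exists_graph_eq
    exact ⟨g, fun p hp => ⟨Multiset.subset_of_le hle (Multiset.mem_map_of_mem _ hp), hg p hp⟩⟩
  · rintro ⟨g, hg⟩
    classical
    have hinj : (s : Set (ι × α)).InjOn Prod.fst := fun p hp q hq hpq =>
      Prod.ext hpq (by rw [← (hg p hp).2, ← (hg q hq).2, hpq])
    rw [← Finset.image_val_of_injOn hinj, Finset.val_le_iff, Finset.image_subset_iff]
    exact fun p hp => (hg p hp).1

theorem forall_exists_agree_iff_forall_subset_graph (C : Set (ι → α)) (U : Finset ι) :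
    (∀ g : ι → α, ∃ f ∈ C, ∀ u ∈ U, f u = g u) ↔
      ∀ s : Finset (ι × α), (∃ g : ι → α, ∀ p ∈ s, p.1 ∈ U ∧ g p.1 = p.2) →
        ∃ f ∈ C, ∀ p ∈ s, f p.1 = p.2 := by
  constructor
  · rintro hC s ⟨g, hg⟩
    obtain ⟨f, hf, hfg⟩ := hC g
    exact ⟨f, hf, fun p hp => (hfg p.1 (hg p hp).1).trans (hg p hp).2⟩
  · intro hC g
    obtain ⟨f, hf, hfg⟩ := hC (U.map ⟨fun u => (u, g u), fun u v huv => congrArg Prod.fst huv⟩)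
      ⟨g, fun _ hp => by obtain ⟨u, hu, rfl⟩ := Finset.mem_map.mp hp; exact ⟨hu, rfl⟩⟩
    exact ⟨f, hf, fun u hu => hfg (u, g u) (Finset.mem_map_of_mem _ hu)⟩

end Graphs

theorem SRIdeal_eq_span_image (𝕜 : Type) [Field 𝕜] {n : ℕ} (C : Set (Fin n → Fin 2)) :
    SRIdeal 𝕜 C = Ideal.span ((fun s => ∏ p ∈ s, X p) ''
      {s : Finset (Fin n × Fin 2) | ¬ ∃ f ∈ C, ∀ p ∈ s, f p.1 = p.2}) := by
  rw [SRIdeal]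
  congr 1
  ext P
  simp [eq_comm]

theorem shatters_iff_not_mem_collapsed_SR_ideal_general (𝕜 : Type) [Field 𝕜] {n : ℕ}
    (C : Set (Fin n → Fin 2)) (U : Finset (Fin n)) :
    Shatters C U ↔
      (∏ u ∈ U, (X u : MvPolynomial (Fin n) 𝕜)) ∉
        Ideal.map (rename (Prod.fst : Fin n × Fin 2 → Fin n) : MvPolynomial (Fin n × Fin 2) 𝕜 →ₐ[𝕜] MvPolynomial (Fin n) 𝕜)
          (SRIdeal 𝕜 C) := by
  classical
  rw [SRIdeal_eq_span_image, map_rename_span_prod_X, prod_X_eq_monomial,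
    mem_ideal_span_monomial_image, support_monomial, if_neg one_ne_zero]
  simp only [Finset.mem_singleton, forall_eq, Set.exists_mem_image, Set.mem_ofPred_eq,
    sum_single_fst_le_sum_single_iff]
  rw [Shatters, forall_exists_agree_iff_forall_subset_graph, not_exists]
  exact forall_congr' fun s => by rw [not_and', not_not]

/-- `C` shatters `U ⊆ [n]` iff the monomial `∏_{u ∈ U} x_u` does not lie in the image
of the Stanley–Reisner ideal of `C` under the collapsing map `x_{u,i} ↦ x_u`. -/
theorem shatters_iff_not_mem_collapsed_SR_ideal (𝕜 : Type) [Field 𝕜] {n : ℕ} (hn : 1 ≤ n)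
    (C : Set (Fin n → Fin 2)) (U : Finset (Fin n)) :
    Shatters C U ↔
      (∏ u ∈ U, (X u : MvPolynomial (Fin n) 𝕜)) ∉
        Ideal.map (rename (Prod.fst : Fin n × Fin 2 → Fin n) : MvPolynomial (Fin n × Fin 2) 𝕜 →ₐ[𝕜] MvPolynomial (Fin n) 𝕜)
          (SRIdeal 𝕜 C) :=
  shatters_iff_not_mem_collapsed_SR_ideal_general 𝕜 C U
end

section
/- Let 𝕜 be a field, n ≥ 1, and let C be a class of functions [n] → [2]. Let M be the free S-module with basis (ε_f)_{f ∈ C} and let φ : M → S be the S-linear map with φ(ε_f) = x^{Γf}. For distinct f, g ∈ C set ζ_{f,g} = (∏_{u : f(u) ≠ g(u)} x_{u,g(u)})·ε_g − (∏_{u : f(u) ≠ g(u)} x_{u,f(u)})·ε_f, and call f and g neighbors if f ≠ g and the only members h ∈ C satisfying h(u) = f(u) for every u with f(u) = g(u) are h = f and h = g. Then the kernel of φ equals the S-submodule spanned by {ζ_{f,g} : f, g neighbors in C}, and this generating set is minimal: for every neighbor pair {f, g}, ζ_{f,g} does not lie in the S-span of the elements ζ_{f',g'} over all other neighbor pairs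 {f', g'}. -/
open MvPolynomial

/-- The monomial `x^{Γf} = ∏_{(u,i) : f(u) ≠ i} x_{u,i}`. -/
noncomputable def xGamma (𝕜 : Type) [Field 𝕜] {n : ℕ} (f : Fin n → Fin 2) :
    MvPolynomial (Fin n × Fin 2) 𝕜 :=
  ∏ p ∈ Finset.univ.filter (fun p : Fin n × Fin 2 => f p.1 ≠ p.2), X p

/-- `f` and `g` are neighbors in `C`: they are distinct and the only members of `C`
agreeing with them wherever they agree are `f` and `g` themselves. -/
def Neighbor {n : ℕ} (C : Set (Fin n → Fin 2)) (f g : Fin n → Fin 2) : Prop :=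
  f ≠ g ∧ ∀ h ∈ C, (∀ u, f u = g u → h u = f u) → h = f ∨ h = g

/-- The first-syzygy element
`ζ_{f,g} = (∏_{u : f(u) ≠ g(u)} x_{u,g(u)})·ε_g − (∏_{u : f(u) ≠ g(u)} x_{u,f(u)})·ε_f`. -/
noncomputable def zeta (𝕜 : Type) [Field 𝕜] {n : ℕ} (C : Set (Fin n → Fin 2)) (f g : ↥C) :
    ↥C →₀ MvPolynomial (Fin n × Fin 2) 𝕜 :=
  (∏ u ∈ Finset.univ.filter
      (fun u : Fin n => (f : Fin n → Fin 2) u ≠ (g : Fin n → Fin 2) u),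
      (X (u, (g : Fin n → Fin 2) u) : MvPolynomial (Fin n × Fin 2) 𝕜)) • Finsupp.single g 1
  - (∏ u ∈ Finset.univ.filter
      (fun u : Fin n => (f : Fin n → Fin 2) u ≠ (g : Fin n → Fin 2) u),
      (X (u, (f : Fin n → Fin 2) u) : MvPolynomial (Fin n × Fin 2) 𝕜)) • Finsupp.single f 1


namespace SyzAux

lemma fin2_rev {x y : Fin 2} (h : x ≠ y) : y = x.rev := by revert h; revert x y; decide

lemma fin2_ne_rev (x : Fin 2) : x ≠ x.rev := by revert x; decide

noncomputable def dexp {n : ℕ} (f : Fin n → Fin 2) : (Fin n × Fin 2) →₀ ℕ :=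
  ∑ u, Finsupp.single (u, (f u).rev) 1

noncomputable def Aexp {n : ℕ} (f g : Fin n → Fin 2) : (Fin n × Fin 2) →₀ ℕ :=
  ∑ u ∈ Finset.univ.filter (fun u => f u ≠ g u), Finsupp.single (u, g u) 1

lemma sumSingleApply {n : ℕ} (s : Finset (Fin n)) (c : Fin n → Fin 2) (a : Fin n) (b : Fin 2) :
    (∑ u ∈ s, Finsupp.single (u, c u) (1:ℕ)) (a, b) = if a ∈ s ∧ b = c a then 1 else 0 := by
  classical
  rw [Finsupp.finset_sum_apply]
  have h1 : ∀ u ∈ s, (Finsupp.single (u, c u) (1:ℕ)) (a, b)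
      = if u = a then (if b = c a then 1 else 0) else 0 := by
    intro u _
    rw [Finsupp.single_apply]
    by_cases h : u = a
    · subst h
      by_cases h2 : b = c u
      · simp [h2]
      · simp [Prod.ext_iff, h2, Ne.symm h2]
    · simp [Prod.ext_iff, h]
  rw [Finset.sum_congr rfl h1, Finset.sum_ite_eq' s a]
  by_cases h : a ∈ s <;> simp [h]

lemma prodX {𝕜 : Type} [Field 𝕜] {σ : Type*} {α : Type*} [DecidableEq α] (s : Finset α) (k : α → σ) :
    (∏ j ∈ s, (X (k j) : MvPolynomial σ 𝕜)) =
      monomial (∑ j ∈ s, Finsupp.single (k j) 1) 1 := by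
  classical
  induction s using Finset.induction_on with
  | empty => simp
  | insert _ _ h ih =>
      rw [Finset.prod_insert h, ih, Finset.sum_insert h, X, monomial_mul, one_mul]

lemma xGamma_eq {𝕜 : Type} [Field 𝕜] {n : ℕ} (f : Fin n → Fin 2) :
    xGamma 𝕜 f = monomial (dexp f) 1 := by
  classical
  have himg : Finset.univ.filter (fun p : Fin n × Fin 2 => f p.1 ≠ p.2)
      = Finset.univ.image (fun u => (u, (f u).rev)) := by
    ext ⟨u, i⟩
    simp only [Finset.mem_filter, Finset.mem_univ, true_and, Finset.mem_image]
    constructor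
    · intro h; exact ⟨u, by rw [← fin2_rev h]⟩
    · rintro ⟨u', h⟩
      obtain ⟨h1, h2⟩ := Prod.ext_iff.1 h
      subst h1; subst h2
      exact fin2_ne_rev _
  rw [xGamma, himg, Finset.prod_image (by intro x _ y _ h; exact (Prod.ext_iff.1 h).1),
    prodX, dexp]

variable {𝕜 : Type} [Field 𝕜] {n : ℕ}

lemma Dset_symm (f g : Fin n → Fin 2) :
    Finset.univ.filter (fun u => f u ≠ g u) = Finset.univ.filter (fun u => g u ≠ f u) := by
  apply Finset.filter_congr; intro u _; simp [ne_comm]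

lemma zeta_eq (C : Set (Fin n → Fin 2)) (f g : ↥C) :
    zeta 𝕜 C f g = (monomial (Aexp (f : Fin n → Fin 2) ↑g) (1:𝕜)) • Finsupp.single g 1
      - (monomial (Aexp (g : Fin n → Fin 2) ↑f) (1:𝕜)) • Finsupp.single f 1 := by
  rw [zeta, prodX, prodX, Aexp, Aexp, Dset_symm (g : Fin n → Fin 2) ↑f]

lemma Lcomm (f g : Fin n → Fin 2) : Aexp f g + dexp g = Aexp g f + dexp f := by
  rw [Aexp, Aexp, dexp, dexp, Dset_symm g f, Finset.sum_filter, Finset.sum_filter,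
    ← Finset.sum_add_distrib, ← Finset.sum_add_distrib]
  apply Finset.sum_congr rfl
  intro u _
  by_cases h : f u = g u
  · simp [h]
  · have h1 : g u = (f u).rev := fin2_rev h
    have h2 : f u = (g u).rev := fin2_rev (Ne.symm h)
    rw [if_pos h, if_pos h, ← h2, ← h1, add_comm]

lemma L_le (f g : Fin n → Fin 2) (e : (Fin n × Fin 2) →₀ ℕ)
    (hf : dexp f ≤ e) (hg : dexp g ≤ e) : Aexp g f + dexp f ≤ e := by
  rw [Finsupp.le_def]
  intro p
  obtain ⟨u, i⟩ := p
  rw [Finsupp.add_apply, Aexp, dexp, sumSingleApply, sumSingleApply]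
  by_cases hA : u ∈ Finset.univ.filter (fun u => g u ≠ f u) ∧ i = f u
  · rw [if_pos hA]
    have hgu : g u ≠ f u := (Finset.mem_filter.1 hA.1).2
    have hi : i = (g u).rev := hA.2.trans (fin2_rev hgu)
    have h0 : ¬ (u ∈ Finset.univ ∧ i = (f u).rev) := by
      rintro ⟨-, hi'⟩
      exact fin2_ne_rev (f u) (hA.2.symm.trans hi')
    rw [if_neg h0]
    have hh := Finsupp.le_def.mp hg (u, i)
    rw [dexp, sumSingleApply] at hh
    simpa [hi] using hh
  · rw [if_neg hA, zero_add]
    have hh := Finsupp.le_def.mp hf (u, i)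
    rw [dexp, sumSingleApply] at hh
    split_ifs at hh ⊢ with h
    · exact hh
    · exact Nat.zero_le _

lemma fin2_opp {a b c : Fin 2} (h1 : a = b → c = a) (h2 : a ≠ c) : c = b := by
  revert h1 h2; revert a b c; decide

lemma Dset_union (f g h : Fin n → Fin 2) (hag : ∀ u, f u = g u → h u = f u) :
    (Finset.univ.filter (fun u => f u ≠ h u)) ∪ (Finset.univ.filter (fun u => h u ≠ g u))
      = Finset.univ.filter (fun u => f u ≠ g u) := by
  ext u
  simp only [Finset.mem_union, Finset.mem_filter, Finset.mem_univ, true_and]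
  have hu := hag u
  revert hu
  generalize f u = a; generalize g u = b; generalize h u = c
  revert a b c; decide

lemma Dset_disj (f g h : Fin n → Fin 2) (hag : ∀ u, f u = g u → h u = f u) :
    Disjoint (Finset.univ.filter (fun u => f u ≠ h u))
      (Finset.univ.filter (fun u => h u ≠ g u)) := by
  rw [Finset.disjoint_left]
  intro u h1 h2
  simp only [Finset.mem_filter, Finset.mem_univ, true_and] at h1 h2
  have hu := hag u
  revert hu h1 h2
  generalize f u = a; generalize g u = b; generalize h u = c
  revert a b c; decide

lemma Asplit1 (f g h : Fin n → Fin 2) (hag : ∀ u, f u = g u → h u = f u) :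
    Aexp f h + Aexp h g = Aexp f g := by
  rw [Aexp, Aexp, Aexp]
  have h1 : ∀ u ∈ Finset.univ.filter (fun u => f u ≠ h u),
      Finsupp.single (u, h u) (1:ℕ) = Finsupp.single (u, g u) 1 := by
    intro u hu
    simp only [Finset.mem_filter, Finset.mem_univ, true_and] at hu
    rw [fin2_opp (hag u) hu]
  rw [Finset.sum_congr rfl h1, ← Finset.sum_union (Dset_disj f g h hag), Dset_union f g h hag]

lemma Asplit2 (f g h : Fin n → Fin 2) (hag : ∀ u, f u = g u → h u = f u) :
    Aexp g h + Aexp h f = Aexp g f :=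
  Asplit1 g f h (fun u hgf => (hag u hgf.symm).trans hgf.symm)

lemma zeta_decomp (C : Set (Fin n → Fin 2)) (f g : ↥C) (h : Fin n → Fin 2) (hC : h ∈ C)
    (hag : ∀ u, (f : Fin n → Fin 2) u = (g : Fin n → Fin 2) u → h u = (f : Fin n → Fin 2) u) :
    zeta 𝕜 C f g = (monomial (Aexp ↑f h) (1:𝕜)) • zeta 𝕜 C ⟨h, hC⟩ g
      + (monomial (Aexp ↑g h) (1:𝕜)) • zeta 𝕜 C f ⟨h, hC⟩ := by
  rw [zeta_eq, zeta_eq, zeta_eq]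
  simp only [smul_sub, smul_smul, monomial_mul, one_mul]
  rw [Asplit1 ↑f ↑g h hag, Asplit2 ↑f ↑g h hag, add_comm (Aexp (f : Fin n → Fin 2) h) (Aexp (g : Fin n → Fin 2) h)]
  abel

lemma pair_mem (C : Set (Fin n → Fin 2)) (f g : ↥C) :
    zeta 𝕜 C f g ∈ Submodule.span (MvPolynomial (Fin n × Fin 2) 𝕜)
      {z | ∃ f' g' : ↥C, Neighbor C ↑f' ↑g' ∧ z = zeta 𝕜 C f' g'} := by
  classical
  suffices H : ∀ k (f g : ↥C),
      (Finset.univ.filter (fun u => (f : Fin n → Fin 2) u ≠ (g : Fin n → Fin 2) u)).card ≤ k →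
      zeta 𝕜 C f g ∈ Submodule.span (MvPolynomial (Fin n × Fin 2) 𝕜)
        {z | ∃ f' g' : ↥C, Neighbor C ↑f' ↑g' ∧ z = zeta 𝕜 C f' g'} by
    exact H _ f g le_rfl
  intro k
  induction k with
  | zero =>
      intro f g hcard
      have hD : Finset.univ.filter (fun u => (f : Fin n → Fin 2) u ≠ (g : Fin n → Fin 2) u) = ∅ :=
        Finset.card_eq_zero.mp (Nat.le_zero.mp hcard)
      have hfg : f = g := by
        apply Subtype.ext; funext u
        by_contra hne
        have : u ∈ Finset.univ.filter (fun u => (f : Fin n → Fin 2) u ≠ (g : Fin n → Fin 2) u) := by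
          simp [hne]
        rw [hD] at this
        exact absurd this (Finset.notMem_empty u)
      subst hfg
      rw [zeta_eq, sub_self]
      exact Submodule.zero_mem _
  | succ k ih =>
      intro f g hcard
      by_cases hfg : (f : Fin n → Fin 2) = ↑g
      · have : f = g := Subtype.ext hfg
        subst this
        rw [zeta_eq, sub_self]
        exact Submodule.zero_mem _
      by_cases hN : Neighbor C ↑f ↑g
      · exact Submodule.subset_span ⟨f, g, hN, rfl⟩
      rw [Neighbor] at hN
      push_neg at hN
      obtain ⟨h, hC, hag, hnf, hng⟩ := hN hfg
      have hsum : (Finset.univ.filter (fun u => (f : Fin n → Fin 2) u ≠ h u)).card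
          + (Finset.univ.filter (fun u => h u ≠ (g : Fin n → Fin 2) u)).card
          = (Finset.univ.filter (fun u => (f : Fin n → Fin 2) u ≠ (g : Fin n → Fin 2) u)).card := by
        rw [← Finset.card_union_of_disjoint (Dset_disj (↑f) (↑g) h hag),
          Dset_union (↑f) (↑g) h hag]
      have hAnz : 0 < (Finset.univ.filter (fun u => (f : Fin n → Fin 2) u ≠ h u)).card := by
        rw [Finset.card_pos]
        obtain ⟨u, hu⟩ := Function.ne_iff.mp (Ne.symm hnf)
        exact ⟨u, by simp [hu]⟩
      have hBnz : 0 < (Finset.univ.filter (fun u => h u ≠ (g : Fin n → Fin 2) u)).card := by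
        rw [Finset.card_pos]
        obtain ⟨u, hu⟩ := Function.ne_iff.mp hng
        exact ⟨u, by simp [hu]⟩
      rw [zeta_decomp C f g h hC hag]
      refine Submodule.add_mem _ (Submodule.smul_mem _ _ (ih ⟨h, hC⟩ g ?_))
        (Submodule.smul_mem _ _ (ih f ⟨h, hC⟩ ?_))
      · rw [show ((⟨h, hC⟩ : ↥C) : Fin n → Fin 2) = h from rfl]
        omega
      · rw [show ((⟨h, hC⟩ : ↥C) : Fin n → Fin 2) = h from rfl]
        omega

lemma support_sub_term (c : MvPolynomial (Fin n × Fin 2) 𝕜) (a : (Fin n × Fin 2) →₀ ℕ) :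
    (c - monomial a (coeff a c)).support = c.support.erase a := by
  classical
  ext b
  simp only [mem_support_iff, Finset.mem_erase, coeff_sub, coeff_monomial]
  by_cases h : a = b
  · subst h; simp
  · simp only [if_neg h, sub_zero]
    exact ⟨fun h2 => ⟨fun hb => h hb.symm, h2⟩, fun h2 => h2.2⟩

lemma tele (C : Set (Fin n → Fin 2)) (e : (Fin n × Fin 2) →₀ ℕ) :
    ∀ (F : Finset ↥C) (lam : ↥C → 𝕜),
      (∀ f ∈ F, dexp (f : Fin n → Fin 2) ≤ e) →
      (∑ f ∈ F, lam f = 0) →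
      (∑ f ∈ F, (monomial (e - dexp ((f : Fin n → Fin 2))) (lam f)) •
          Finsupp.single f (1 : MvPolynomial (Fin n × Fin 2) 𝕜))
        ∈ Submodule.span (MvPolynomial (Fin n × Fin 2) 𝕜)
          {z | ∃ f' g' : ↥C, Neighbor C ↑f' ↑g' ∧ z = zeta 𝕜 C f' g'} := by
  classical
  intro F
  induction F using Finset.strongInductionOn with
  | _ F ih =>
    intro lam hd h0
    rcases Finset.eq_empty_or_nonempty F with hF | ⟨f, hf⟩
    · subst hF; simp
    by_cases hsing : ∀ g ∈ F, g = f
    · have hFf : F = {f} := Finset.eq_singleton_iff_unique_mem.mpr ⟨hf, hsing⟩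
      rw [hFf] at h0 ⊢
      rw [Finset.sum_singleton] at h0 ⊢
      rw [h0, monomial_zero, zero_smul]
      exact Submodule.zero_mem _
    push_neg at hsing
    obtain ⟨g, hg, hgf⟩ := hsing
    have hg' : g ∈ F.erase f := Finset.mem_erase.mpr ⟨hgf, hg⟩
    set lam' : ↥C → 𝕜 := Function.update lam g (lam g + lam f) with hlam'
    have hdf : dexp ((f : Fin n → Fin 2)) ≤ e := hd f hf
    have hdg : dexp ((g : Fin n → Fin 2)) ≤ e := hd g hg
    have hL : Aexp ((g : Fin n → Fin 2)) ↑f + dexp ((f : Fin n → Fin 2)) ≤ e :=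
      L_le _ _ e hdf hdg
    have h1 : e - (Aexp ((g : Fin n → Fin 2)) ↑f + dexp ((f : Fin n → Fin 2)))
        + Aexp ((g : Fin n → Fin 2)) ↑f = e - dexp ((f : Fin n → Fin 2)) := by
      rw [add_comm (Aexp ((g : Fin n → Fin 2)) ↑f) (dexp ((f : Fin n → Fin 2))), ← tsub_tsub]
      exact tsub_add_cancel_of_le (le_tsub_of_add_le_left (by rwa [add_comm] at hL))
    have hL2 : Aexp ((f : Fin n → Fin 2)) ↑g + dexp ((g : Fin n → Fin 2)) ≤ e := by
      rw [Lcomm]; exact hL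
    have h2 : e - (Aexp ((g : Fin n → Fin 2)) ↑f + dexp ((f : Fin n → Fin 2)))
        + Aexp ((f : Fin n → Fin 2)) ↑g = e - dexp ((g : Fin n → Fin 2)) := by
      rw [← Lcomm ((f : Fin n → Fin 2)) ↑g,
        add_comm (Aexp ((f : Fin n → Fin 2)) ↑g) (dexp ((g : Fin n → Fin 2))), ← tsub_tsub]
      exact tsub_add_cancel_of_le (le_tsub_of_add_le_left (by rwa [add_comm] at hL2))
    have hB : (monomial (e - dexp ((f : Fin n → Fin 2))) (lam f)) •
          Finsupp.single f (1 : MvPolynomial (Fin n × Fin 2) 𝕜)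
        - (monomial (e - dexp ((g : Fin n → Fin 2))) (lam f)) • Finsupp.single g 1
        = (monomial (e - (Aexp ((g : Fin n → Fin 2)) ↑f + dexp ((f : Fin n → Fin 2)))) (lam f))
            • zeta 𝕜 C g f := by
      rw [zeta_eq, smul_sub, smul_smul, smul_smul, monomial_mul, monomial_mul, mul_one,
        h1, h2]
    have hupd : ∀ f' ∈ (F.erase f).erase g,
        (monomial (e - dexp ((f' : Fin n → Fin 2))) (lam' f')) •
          Finsupp.single f' (1 : MvPolynomial (Fin n × Fin 2) 𝕜)
        = (monomial (e - dexp ((f' : Fin n → Fin 2))) (lam f')) • Finsupp.single f' 1 := by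
      intro f' hf'
      rw [hlam', Function.update_of_ne (Finset.ne_of_mem_erase hf')]
    have key : (∑ f' ∈ F, (monomial (e - dexp ((f' : Fin n → Fin 2))) (lam f')) •
          Finsupp.single f' (1 : MvPolynomial (Fin n × Fin 2) 𝕜))
        = (∑ f' ∈ F.erase f, (monomial (e - dexp ((f' : Fin n → Fin 2))) (lam' f')) •
            Finsupp.single f' 1)
          + ((monomial (e - dexp ((f : Fin n → Fin 2))) (lam f)) • Finsupp.single f 1
            - (monomial (e - dexp ((g : Fin n → Fin 2))) (lam f)) • Finsupp.single g 1) := by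
      rw [← Finset.add_sum_erase _ _ hf, ← Finset.add_sum_erase _ _ hg',
        ← Finset.add_sum_erase _ _ hg']
      rw [Finset.sum_congr rfl hupd, hlam', Function.update_self, map_add, add_smul]
      abel
    have h0' : ∑ f' ∈ F.erase f, lam' f' = 0 := by
      rw [← Finset.add_sum_erase _ lam' hg']
      have hcg : ∑ f' ∈ (F.erase f).erase g, lam' f' = ∑ f' ∈ (F.erase f).erase g, lam f' :=
        Finset.sum_congr rfl
          (fun f' hf' => by rw [hlam', Function.update_of_ne (Finset.ne_of_mem_erase hf')])
      rw [hcg, hlam', Function.update_self]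
      have h00 := h0
      rw [← Finset.add_sum_erase _ lam hf, ← Finset.add_sum_erase _ lam hg'] at h00
      linear_combination h00
    rw [key]
    refine Submodule.add_mem _
      (ih (F.erase f) (Finset.erase_ssubset hf) lam'
        (fun f' hf' => hd f' (Finset.mem_of_mem_erase hf')) h0') ?_
    rw [hB]
    exact Submodule.smul_mem _ _ (pair_mem C g f)

lemma Ale_key (f g h : Fin n → Fin 2) (hle : Aexp h f ≤ Aexp g f) :
    ∀ u, f u = g u → h u = f u := by
  intro u hu
  by_contra hne
  have h1 := Finsupp.le_def.mp hle (u, f u)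
  rw [Aexp, Aexp, sumSingleApply, sumSingleApply] at h1
  rw [if_pos ⟨Finset.mem_filter.mpr ⟨Finset.mem_univ u, hne⟩, rfl⟩, if_neg] at h1
  · exact Nat.not_succ_le_zero 0 h1
  · rintro ⟨hmem, -⟩
    exact (Finset.mem_filter.1 hmem).2 hu.symm

set_option maxHeartbeats 1000000 in
lemma minimal (C : Set (Fin n → Fin 2)) (f g : ↥C) (hN : Neighbor C ↑f ↑g) :
    zeta 𝕜 C f g ∉ Submodule.span (MvPolynomial (Fin n × Fin 2) 𝕜)
      {z | ∃ f' g' : ↥C, Neighbor C ↑f' ↑g' ∧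
        ({(f' : Fin n → Fin 2), (g' : Fin n → Fin 2)} : Set (Fin n → Fin 2)) ≠
          {(f : Fin n → Fin 2), (g : Fin n → Fin 2)} ∧ z = zeta 𝕜 C f' g'} := by
  classical
  intro hmem
  have hfg : f ≠ g := fun h => hN.1 (congrArg Subtype.val h)
  have hP : ∀ p : MvPolynomial (Fin n × Fin 2) 𝕜,
      coeff (Aexp ((g : Fin n → Fin 2)) ↑f) (p * (zeta 𝕜 C f g) f) = 0 := by
    refine Submodule.span_induction
      (p := fun v _ => ∀ p : MvPolynomial (Fin n × Fin 2) 𝕜,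
        coeff (Aexp ((g : Fin n → Fin 2)) ↑f) (p * v f) = 0)
      ?_ ?_ ?_ ?_ hmem
    · rintro z ⟨f', g', hN', hset, rfl⟩ p
      rw [zeta_eq, Finsupp.sub_apply, Finsupp.smul_apply, Finsupp.smul_apply, smul_eq_mul,
        smul_eq_mul, Finsupp.single_apply, Finsupp.single_apply]
      by_cases hg'f : g' = f
      · subst hg'f
        have hf'g' : f' ≠ g' := fun h => hN'.1 (congrArg Subtype.val h)
        have hnot : ¬ Aexp ((f' : Fin n → Fin 2)) ↑g' ≤ Aexp ((g : Fin n → Fin 2)) ↑g' := by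
          intro hle
          rcases hN.2 ↑f' f'.2 (Ale_key _ _ _ hle) with h | h
          · exact hN'.1 h
          · exact hset (by rw [h, Set.pair_comm])
        rw [if_pos rfl, mul_one, if_neg hf'g', mul_zero, sub_zero, coeff_mul_monomial',
          if_neg hnot]
      by_cases hf'f : f' = f
      · subst hf'f
        have hnot : ¬ Aexp ((g' : Fin n → Fin 2)) ↑f' ≤ Aexp ((g : Fin n → Fin 2)) ↑f' := by
          intro hle
          rcases hN.2 ↑g' g'.2 (Ale_key _ _ _ hle) with h | h
          · exact hN'.1 h.symm
          · exact hset (by rw [h])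
        rw [if_pos rfl, mul_one, if_neg hg'f, mul_zero, zero_sub, mul_neg, coeff_neg,
          neg_eq_zero, coeff_mul_monomial', if_neg hnot]
      · rw [if_neg hg'f, if_neg hf'f, mul_zero, mul_zero, sub_zero, mul_zero]
        exact coeff_zero _
    · intro p
      simp
    · intro x y hx hy ihx ihy p
      rw [Finsupp.add_apply, mul_add]
      rw [coeff_add, ihx p, ihy p, add_zero]
    · intro q x hx ihx p
      rw [Finsupp.smul_apply, smul_eq_mul, ← mul_assoc]
      exact ihx (p * q)
  have hone := hP 1
  rw [zeta_eq, one_mul, Finsupp.sub_apply, Finsupp.smul_apply, Finsupp.smul_apply,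
    smul_eq_mul, smul_eq_mul, Finsupp.single_apply, Finsupp.single_apply,
    if_neg (fun h : g = f => hfg h.symm), if_pos rfl, mul_zero, mul_one, zero_sub,
    coeff_neg, coeff_monomial, if_pos rfl, neg_eq_zero] at hone
  exact one_ne_zero hone

set_option maxHeartbeats 1000000 in
lemma ker_eq (C : Set (Fin n → Fin 2))
    (φ : (↥C →₀ MvPolynomial (Fin n × Fin 2) 𝕜) →ₗ[MvPolynomial (Fin n × Fin 2) 𝕜]
      MvPolynomial (Fin n × Fin 2) 𝕜)
    (hφ : ∀ f : ↥C, φ (Finsupp.single f 1) = xGamma 𝕜 (f : Fin n → Fin 2)) :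
    LinearMap.ker φ = Submodule.span (MvPolynomial (Fin n × Fin 2) 𝕜)
      {z | ∃ f g : ↥C, Neighbor C ↑f ↑g ∧ z = zeta 𝕜 C f g} := by
  classical
  haveI : Fintype ↥C := Fintype.ofFinite ↥C
  refine le_antisymm ?_ ?_
  swap
  · refine Submodule.span_le.mpr ?_
    rintro z ⟨f, g, hN, rfl⟩
    simp only [SetLike.mem_coe, LinearMap.mem_ker]
    rw [zeta_eq, map_sub, map_smul, map_smul, hφ, hφ, xGamma_eq, xGamma_eq, smul_eq_mul,
      smul_eq_mul, monomial_mul, monomial_mul, mul_one, Lcomm, sub_self]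
  intro v hv
  rw [LinearMap.mem_ker] at hv
  have H : ∀ (m : ℕ) (v : ↥C →₀ MvPolynomial (Fin n × Fin 2) 𝕜),
      (∑ f : ↥C, ((v f).support.card)) ≤ m → φ v = 0 →
      v ∈ Submodule.span (MvPolynomial (Fin n × Fin 2) 𝕜)
        {z | ∃ f g : ↥C, Neighbor C ↑f ↑g ∧ z = zeta 𝕜 C f g} := by
    intro m
    induction m with
    | zero =>
        intro v hm _
        have hv0 : v = 0 := by
          refine Finsupp.ext fun f => ?_
          have h1 : (v f).support.card = 0 := Nat.le_zero.mp (le_trans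
            (Finset.single_le_sum (fun (i : ↥C) _ => Nat.zero_le ((v i).support.card))
              (Finset.mem_univ f)) hm)
          rw [Finsupp.zero_apply]
          exact support_eq_empty.mp (Finset.card_eq_zero.mp h1)
        rw [hv0]; exact Submodule.zero_mem _
    | succ m ihm =>
        intro v hm hv
        by_cases hv0 : v = 0
        · rw [hv0]; exact Submodule.zero_mem _
        obtain ⟨f₀, hf₀⟩ := Finsupp.ne_iff.mp hv0
        rw [Finsupp.zero_apply] at hf₀
        obtain ⟨m₀, hm₀⟩ := support_nonempty.mpr hf₀
        set e : (Fin n × Fin 2) →₀ ℕ := m₀ + dexp ((f₀ : Fin n → Fin 2)) with he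
        set F : Finset ↥C :=
          Finset.univ.filter (fun f : ↥C => dexp ((f : Fin n → Fin 2)) ≤ e) with hF
        have hFmem : ∀ f : ↥C, f ∈ F ↔ dexp ((f : Fin n → Fin 2)) ≤ e := by
          intro f; rw [hF, Finset.mem_filter]; simp
        set lam : ↥C → 𝕜 := fun f => coeff (e - dexp ((f : Fin n → Fin 2))) (v f) with hlam
        set w := ∑ f ∈ F, (monomial (e - dexp ((f : Fin n → Fin 2))) (lam f)) •
          Finsupp.single f (1 : MvPolynomial (Fin n × Fin 2) 𝕜) with hw
        have hvdecomp : (∑ f : ↥C, Finsupp.single f (v f)) = v := by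
          conv_rhs => rw [← Finsupp.sum_single v]
          rw [Finsupp.sum]
          exact (Finset.sum_subset (Finset.subset_univ _)
            (fun f _ hf => by rw [Finsupp.notMem_support_iff.mp hf, Finsupp.single_zero])).symm
        have hφv : φ v = ∑ f : ↥C, (v f) * monomial (dexp ((f : Fin n → Fin 2))) 1 := by
          conv_lhs => rw [← hvdecomp]
          rw [map_sum]
          refine Finset.sum_congr rfl (fun f _ => ?_)
          rw [show Finsupp.single f (v f)
                = (v f) • Finsupp.single f (1 : MvPolynomial (Fin n × Fin 2) 𝕜) from by
              rw [Finsupp.smul_single', mul_one],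
            map_smul, hφ, xGamma_eq, smul_eq_mul]
        have hsum0 : ∑ f ∈ F, lam f = 0 := by
          have h1 : coeff e (φ v) = 0 := by rw [hv, coeff_zero]
          rw [hφv, coeff_sum] at h1
          have h2 : ∀ f : ↥C, coeff e ((v f) * monomial (dexp ((f : Fin n → Fin 2))) 1)
              = if dexp ((f : Fin n → Fin 2)) ≤ e then lam f else 0 := by
            intro f
            rw [coeff_mul_monomial']
            split_ifs with h
            · rw [mul_one, hlam]
            · rfl
          rw [Finset.sum_congr rfl (fun f _ => h2 f)] at h1
          rw [hF, Finset.sum_filter]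
          exact h1
        have hφw : φ w = 0 := by
          rw [hw, map_sum]
          have h3 : ∀ f ∈ F, φ ((monomial (e - dexp ((f : Fin n → Fin 2))) (lam f)) •
              Finsupp.single f (1 : MvPolynomial (Fin n × Fin 2) 𝕜)) = monomial e (lam f) := by
            intro f hf
            rw [map_smul, hφ, xGamma_eq, smul_eq_mul, monomial_mul, mul_one,
              tsub_add_cancel_of_le ((hFmem f).mp hf)]
          rw [Finset.sum_congr rfl h3, ← map_sum (monomial e) lam F, hsum0, monomial_zero]
        have hwmem : w ∈ Submodule.span (MvPolynomial (Fin n × Fin 2) 𝕜)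
            {z | ∃ f g : ↥C, Neighbor C ↑f ↑g ∧ z = zeta 𝕜 C f g} := by
          rw [hw]
          exact tele C e F lam (fun f hf => (hFmem f).mp hf) hsum0
        have hwapp : ∀ f : ↥C, w f
            = if f ∈ F then monomial (e - dexp ((f : Fin n → Fin 2))) (lam f) else 0 := by
          intro f
          rw [hw, Finsupp.finset_sum_apply]
          have h4 : ∀ f' ∈ F, ((monomial (e - dexp ((f' : Fin n → Fin 2))) (lam f')) •
                Finsupp.single f' (1 : MvPolynomial (Fin n × Fin 2) 𝕜)) f
              = if f' = f then monomial (e - dexp ((f' : Fin n → Fin 2))) (lam f') else 0 := by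
            intro f' _
            rw [Finsupp.smul_apply, Finsupp.single_apply]
            split_ifs with h
            · rw [smul_eq_mul, mul_one]
            · rw [smul_zero]
          rw [Finset.sum_congr rfl h4, Finset.sum_ite_eq' F f]
        have hf₀F : f₀ ∈ F := by
          rw [hFmem f₀, he]
          exact le_add_self
        have hcard : ∀ f : ↥C, ((v - w) f).support.card ≤ (v f).support.card := by
          intro f
          rw [Finsupp.sub_apply, hwapp f]
          split_ifs with h
          · rw [hlam, support_sub_term]
            exact Finset.card_erase_le
          · rw [sub_zero]
        have hcard₀ : ((v - w) f₀).support.card < (v f₀).support.card := by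
          rw [Finsupp.sub_apply, hwapp f₀, if_pos hf₀F, hlam, support_sub_term]
          apply Finset.card_erase_lt_of_mem
          rw [he, add_tsub_cancel_right]
          exact hm₀
        have hmeas : ∑ f : ↥C, ((v - w) f).support.card ≤ m := by
          have h5 := Finset.sum_lt_sum (fun (f : ↥C) _ => hcard f)
            ⟨f₀, Finset.mem_univ f₀, hcard₀⟩
          omega
        have hker2 : φ (v - w) = 0 := by rw [map_sub, hv, hφw, sub_zero]
        have hmem2 := ihm (v - w) hmeas hker2
        have h6 := Submodule.add_mem _ hmem2 hwmem
        rwa [sub_add_cancel] at h6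
  exact H _ v le_rfl hv

end SyzAux

/-- The kernel of the presentation `φ : ⊕_{f ∈ C} S·ε_f → 𝕀_C`, `ε_f ↦ x^{Γf}`, is
minimally generated by the syzygies `ζ_{f,g}` over neighbor pairs `{f,g}` of `C`. -/
theorem syzygy_of_canonical_ideal (𝕜 : Type) [Field 𝕜] {n : ℕ} (hn : 1 ≤ n)
    (C : Set (Fin n → Fin 2))
    (φ : (↥C →₀ MvPolynomial (Fin n × Fin 2) 𝕜) →ₗ[MvPolynomial (Fin n × Fin 2) 𝕜]
      MvPolynomial (Fin n × Fin 2) 𝕜)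
    (hφ : ∀ f : ↥C, φ (Finsupp.single f 1) = xGamma 𝕜 (f : Fin n → Fin 2)) :
    LinearMap.ker φ = Submodule.span (MvPolynomial (Fin n × Fin 2) 𝕜)
        {z | ∃ f g : ↥C, Neighbor C ↑f ↑g ∧ z = zeta 𝕜 C f g} ∧
    ∀ f g : ↥C, Neighbor C ↑f ↑g →
      zeta 𝕜 C f g ∉ Submodule.span (MvPolynomial (Fin n × Fin 2) 𝕜)
        {z | ∃ f' g' : ↥C, Neighbor C ↑f' ↑g' ∧
          ({(f' : Fin n → Fin 2), (g' : Fin n → Fin 2)} : Set (Fin n → Fin 2)) ≠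
            {(f : Fin n → Fin 2), (g : Fin n → Fin 2)} ∧
          z = zeta 𝕜 C f' g'} := by
  exact ⟨SyzAux.ker_eq C φ hφ, fun f g hN => SyzAux.minimal C f g hN⟩
end

section
/- Let U be a finite type and let L be an ℝ-linear subspace of the space of functions U → ℝ. If g ∈ thr L and φ ∈ L, then the function sending u to sign(φ(u)) when φ(u) ≠ 0 and to g(u) when φ(u) = 0 also belongs to thr L. (Every strongly thresholded linear class is closed under the operation g ⋊ sign(φ) of overriding g by the sign pattern of a member φ of L wherever φ is nonzero.) -/
/-!
If `g = sign ψ` with `ψ ∈ L` nowhere zero, then for small `ε > 0` the function `φ + ε • ψ ∈ L`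
has the sign of `φ` wherever `φ ≠ 0` (by continuity of `sign` away from `0`) and the sign of
`ψ` wherever `φ = 0`; as `U` is finite, a single `ε` works at every point.
-/

open Filter Topology

/-- The strongly thresholded class of a linear subspace `L` of real functions on `U`:
the sign functions of members of `L` that vanish nowhere. -/
def thr {U : Type} [Fintype U] (L : Submodule ℝ (U → ℝ)) : Set (U → SignType) :=
  {g | ∃ φ ∈ L, (∀ u, φ u ≠ 0) ∧ ∀ u, g u = SignType.sign (φ u)}

theorem eventually_sign_add_mul_eq {α : Type*} [Field α] [LinearOrder α] [IsStrictOrderedRing α]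
    [TopologicalSpace α] [OrderTopology α] (a b : α) :
    ∀ᶠ ε in 𝓝[>] (0 : α),
      SignType.sign (a + ε * b) = if a = 0 then SignType.sign b else SignType.sign a := by
  split_ifs with ha
  · filter_upwards [self_mem_nhdsWithin] with ε (hε : 0 < ε)
    rw [ha, zero_add, sign_mul, sign_pos hε, one_mul]
  · have hlim : Tendsto (fun ε => a + ε * b) (𝓝[>] 0) (𝓝 a) :=
      ((by fun_prop : Continuous fun ε : α => a + ε * b).tendsto' 0 a (by simp)).mono_left
        nhdsWithin_le_nhds
    simpa only [Function.comp_def, nhds_discrete, tendsto_pure] using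
      (continuousAt_sign_of_ne_zero ha).tendsto.comp hlim

theorem exists_sign_add_smul_eq_override {U α : Type*} [Finite U] [Field α] [LinearOrder α]
    [IsStrictOrderedRing α] [TopologicalSpace α] [OrderTopology α] (φ ψ : U → α) :
    ∃ ε : α, ∀ u, SignType.sign ((φ + ε • ψ) u) =
      if φ u = 0 then SignType.sign (ψ u) else SignType.sign (φ u) :=
  (eventually_all.2 fun u => eventually_sign_add_mul_eq (φ u) (ψ u)).exists

/-- A strongly thresholded linear class is closed under overriding a member `g` by the
sign pattern of any `φ ∈ L` wherever `φ` is nonzero. -/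
theorem thr_closed_under_override {U : Type} [Fintype U] (L : Submodule ℝ (U → ℝ))
    (g : U → SignType) (hg : g ∈ thr L) (φ : U → ℝ) (hφ : φ ∈ L) :
    (fun u => if φ u = 0 then g u else SignType.sign (φ u)) ∈ thr L := by
  obtain ⟨ψ, hψL, hψ0, hgψ⟩ := hg
  obtain ⟨ε, hε⟩ := exists_sign_add_smul_eq_override φ ψ
  refine ⟨φ + ε • ψ, L.add_mem hφ (L.smul_mem ε hψL), fun u => ?_,
    fun u => by simp only [hε u, hgψ]⟩
  rw [← sign_ne_zero, hε u]
  split_ifs with h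
  · exact sign_ne_zero.2 (hψ0 u)
  · exact sign_ne_zero.2 h
end

section
/- Let d ≥ 1 and let p ∈ MvPolynomial (Fin d) ℝ have totalDegree p < d. If p(u)·parity(u) ≥ 0 for every cube point u ∈ {−1,1}^d, then p(u) = 0 for every cube point u. (No polynomial of total degree less than d weakly represents the parity function on d bits.) -/
/-!
Parity is orthogonal to every polynomial of degree `< d` on the cube: each monomial of such a
polynomial misses some variable `xᵢ`, so its product with `x₁ ⋯ x_d` contains `xᵢ` to the first
power and sums to zero over `xᵢ = ±1`. Hence `∑ᵤ p(u)·parity(u) = 0`; when all summands are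
nonnegative they all vanish, and `parity(u) = ±1 ≠ 0` forces `p(u) = 0`.
-/

/-- `u` is a point of the cube `{−1,1}^d`. -/
def Cube {d : ℕ} (u : Fin d → ℝ) : Prop := ∀ i, u i = 1 ∨ u i = -1

open MvPolynomial Finset

lemma Finsupp.exists_eq_zero_of_degree_lt_card {σ : Type*} [Fintype σ] {m : σ →₀ ℕ}
    (h : m.degree < Fintype.card σ) : ∃ i, m i = 0 := by
  by_contra! hm
  have : Fintype.card σ ≤ m.degree := by
    rw [Finsupp.degree_eq_sum, Fintype.card_eq_sum_ones]
    exact Finset.sum_le_sum fun i _ => Nat.one_le_iff_ne_zero.2 (hm i)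
  omega

def signCube (σ R : Type*) [Fintype σ] [DecidableEq σ] [CommRing R] [DecidableEq R] :
    Finset (σ → R) :=
  Fintype.piFinset fun _ => {1, -1}

variable {σ R : Type*} [Fintype σ] [DecidableEq σ]

lemma sum_signCube_prod_pow_eq_zero [CommRing R] [DecidableEq R] (hR : (1 : R) ≠ -1)
    (n : σ → ℕ) (i : σ) (hi : Odd (n i)) :
    ∑ u ∈ signCube σ R, ∏ j, u j ^ n j = 0 := by
  refine (sum_prod_piFinset _ fun j x => x ^ n j).trans (prod_eq_zero (mem_univ i) ?_)
  rw [sum_pair hR, one_pow, hi.neg_one_pow, add_neg_cancel]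

lemma sum_signCube_eval_mul_prod_eq_zero [CommRing R] [DecidableEq R] (hR : (1 : R) ≠ -1)
    (p : MvPolynomial σ R) (hdeg : p.totalDegree < Fintype.card σ) :
    ∑ u ∈ signCube σ R, eval u p * ∏ i, u i = 0 := by
  calc ∑ u ∈ signCube σ R, eval u p * ∏ i, u i
      = ∑ m ∈ p.support, coeff m p * ∑ u ∈ signCube σ R, ∏ i, u i ^ (m i + 1) := by
        simp only [eval_eq', sum_mul, mul_sum, mul_assoc, ← prod_mul_distrib, pow_succ]
        exact sum_comm
    _ = 0 := sum_eq_zero fun m hm => by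
        obtain ⟨i, hi⟩ := Finsupp.exists_eq_zero_of_degree_lt_card
          ((le_totalDegree hm).trans_lt hdeg)
        exact mul_eq_zero_of_right _ (sum_signCube_prod_pow_eq_zero hR _ i (by simp [hi]))

lemma eval_eq_zero_of_nonneg_eval_mul_prod [CommRing R] [LinearOrder R] [IsStrictOrderedRing R]
    (p : MvPolynomial σ R) (hdeg : p.totalDegree < Fintype.card σ)
    (h : ∀ u ∈ signCube σ R, 0 ≤ eval u p * ∏ i, u i) {u : σ → R} (hu : u ∈ signCube σ R) :
    eval u p = 0 := by
  have hR : (1 : R) ≠ -1 := (neg_one_lt_zero.trans zero_lt_one).ne'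
  have hprod : ∏ i, u i ≠ 0 := prod_ne_zero_iff.2 fun i _ => by
    have hi : u i = 1 ∨ u i = -1 := by simpa using Fintype.mem_piFinset.1 hu i
    rcases hi with hi | hi <;> simp [hi]
  exact (mul_eq_zero.1 ((sum_eq_zero_iff_of_nonneg h).1
    (sum_signCube_eval_mul_prod_eq_zero hR p hdeg) u hu)).resolve_right hprod

lemma cube_iff_mem_signCube {d : ℕ} {u : Fin d → ℝ} : Cube u ↔ u ∈ signCube (Fin d) ℝ := by
  simp [Cube, signCube, Fintype.mem_piFinset]

theorem no_weak_representation_of_parity_general {d : ℕ}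
    (p : MvPolynomial (Fin d) ℝ) (hdeg : p.totalDegree < d)
    (h : ∀ u : Fin d → ℝ, Cube u → 0 ≤ MvPolynomial.eval u p * ∏ i, u i) :
    ∀ u : Fin d → ℝ, Cube u → MvPolynomial.eval u p = 0 := fun u hu =>
  eval_eq_zero_of_nonneg_eval_mul_prod p (by rwa [Fintype.card_fin])
    (fun v hv => h v (cube_iff_mem_signCube.2 hv)) (cube_iff_mem_signCube.1 hu)

/-- No polynomial of total degree less than `d` weakly represents the parity function on
`d` bits: if `p(u)·parity(u) ≥ 0` on the cube, then `p` vanishes on the cube. -/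
theorem no_weak_representation_of_parity {d : ℕ} (hd : 1 ≤ d)
    (p : MvPolynomial (Fin d) ℝ) (hdeg : p.totalDegree < d)
    (h : ∀ u : Fin d → ℝ, Cube u → 0 ≤ MvPolynomial.eval u p * ∏ i, u i) :
    ∀ u : Fin d → ℝ, Cube u → MvPolynomial.eval u p = 0 :=
  no_weak_representation_of_parity_general p hdeg h
end

section
/- For every d ≥ 1 and every k < d there is no polynomial p ∈ MvPolynomial (Fin d) ℝ with totalDegree p ≤ k such that p(u)·parity(u) > 0 for every cube point u ∈ {−1,1}^d. That is, the parity function on d bits is not computed by any polynomial threshold function of degree less than d (Minsky–Papert). -/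
open MvPolynomial Finset

noncomputable def cubeFinset (d : ℕ) : Finset (Fin d → ℝ) := Fintype.piFinset fun _ => {1, -1}

lemma mem_cubeFinset {d : ℕ} {u : Fin d → ℝ} : u ∈ cubeFinset d ↔ Cube u := by
  simp [cubeFinset, Cube]

lemma sum_cubeFinset_prod_pow {d : ℕ} (n : Fin d → ℕ) :
    ∑ u ∈ cubeFinset d, ∏ i, u i ^ n i = ∏ i, (1 + (-1) ^ n i) := by
  rw [cubeFinset, ← prod_univ_sum (f := fun i (a : ℝ) => a ^ n i)]
  refine prod_congr rfl fun i _ => ?_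
  rw [sum_pair (by norm_num), one_pow]

lemma sum_cubeFinset_prod_pow_eq_zero {d : ℕ} (n : Fin d → ℕ) {j : Fin d} (hj : Odd (n j)) :
    ∑ u ∈ cubeFinset d, ∏ i, u i ^ n i = 0 := by
  rw [sum_cubeFinset_prod_pow]
  exact prod_eq_zero (mem_univ j) (by rw [hj.neg_one_pow]; norm_num)

lemma sum_cubeFinset_prod_pow_mul_parity {d : ℕ} (n : Fin d → ℕ) (hn : ∑ i, n i < d) :
    ∑ u ∈ cubeFinset d, (∏ i, u i ^ n i) * ∏ i, u i = 0 := by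
  obtain ⟨j, hj⟩ : ∃ j, n j = 0 := by
    obtain ⟨j, -, hj⟩ :=
      exists_lt_of_sum_lt (s := univ) (f := n) (g := fun _ => 1) (by simpa using hn)
    exact ⟨j, Nat.lt_one_iff.mp hj⟩
  simp_rw [← prod_mul_distrib, ← pow_succ]
  exact sum_cubeFinset_prod_pow_eq_zero _ (j := j) (by simp [hj])

lemma sum_cubeFinset_eval_mul_parity {d : ℕ} (p : MvPolynomial (Fin d) ℝ)
    (hp : p.totalDegree < d) : ∑ u ∈ cubeFinset d, eval u p * ∏ i, u i = 0 := by
  simp_rw [eval_eq', sum_mul, mul_assoc]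
  rw [sum_comm]
  refine sum_eq_zero fun m hm => ?_
  rw [← mul_sum, sum_cubeFinset_prod_pow_mul_parity, mul_zero]
  exact lt_of_le_of_lt (by simpa [Finsupp.sum_fintype] using le_totalDegree hm) hp

theorem parity_not_polythr_general {d k : ℕ} (hk : k < d) :
    ¬ ∃ p : MvPolynomial (Fin d) ℝ, p.totalDegree ≤ k ∧
      ∀ u : Fin d → ℝ, Cube u → 0 < MvPolynomial.eval u p * ∏ i, u i := by
  rintro ⟨p, hdeg, hpos⟩
  have hcube : (cubeFinset d).Nonempty := ⟨1, mem_cubeFinset.mpr fun _ => Or.inl rfl⟩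
  have hsum_pos : 0 < ∑ u ∈ cubeFinset d, eval u p * ∏ i, u i :=
    sum_pos (fun u hu => hpos u (mem_cubeFinset.mp hu)) hcube
  exact hsum_pos.ne' (sum_cubeFinset_eval_mul_parity p (hdeg.trans_lt hk))

/-- Minsky–Papert: for `k < d` there is no polynomial of total degree at most `k` whose
sign on the cube `{−1,1}^d` computes the parity function on `d` bits. -/
theorem parity_not_polythr {d k : ℕ} (hd : 1 ≤ d) (hk : k < d) :
    ¬ ∃ p : MvPolynomial (Fin d) ℝ, p.totalDegree ≤ k ∧
      ∀ u : Fin d → ℝ, Cube u → 0 < MvPolynomial.eval u p * ∏ i, u i :=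
  parity_not_polythr_general hk
end

section
/- Let d ≥ 1 and let f be a function defined on the cube {−1,1}^d with values in {−1,1} that is symmetric: f(u ∘ π) = f(u) for every permutation π of Fin d and every cube point u. For 0 ≤ s ≤ d let f̄(s) denote the common value of f at cube points having exactly s coordinates equal to −1, and let r = |{s ∈ {0,…,d−1} : f̄(s) ≠ f̄(s+1)}| be the number of sign changes of f. Then for every natural number k the following are equivalent: (i) there exists a polynomial p ∈ MvPolynomial (Fin d) ℝ with totalDegree p ≤ k such that p(u)·f(u) > 0 for every cube point u; (ii) k ≥ r. (The threshold degree of a symmetric Boolean function equals its number of sign changes.) -/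
open Finset Polynomial

section Layer

variable {α : Type*} [Fintype α]

lemma card_filter_powersetCard_superset_mul_descFactorial [DecidableEq α] (A : Finset α) (s : ℕ) :
    #{T ∈ powersetCard s univ | A ⊆ T} * (Fintype.card α).descFactorial #A =
      (Fintype.card α).choose s * s.descFactorial #A := by
  rcases le_or_gt #A s with hAs | hsA
  · have hchoose := Nat.choose_mul (n := Fintype.card α) hAs
    rw [card_filter_powersetCard_subset A univ s (subset_univ A) hAs, card_univ,
      Nat.descFactorial_eq_factorial_mul_choose, Nat.descFactorial_eq_factorial_mul_choose]
    linear_combination (#A).factorial * hchoose.symm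
  · have hempty : ({T ∈ powersetCard s univ | A ⊆ T} : Finset (Finset α)) = ∅ :=
      filter_eq_empty_iff.2 fun T hT hAT => by
        have := card_le_card hAT
        rw [(mem_powersetCard.1 hT).2] at this
        omega
    rw [hempty, Nat.descFactorial_eq_zero_iff_lt.2 hsA, card_empty, zero_mul, mul_zero]

noncomputable def layerPoly (S : Finset α) (c : α → ℝ) : ℝ[X] :=
  ∑ A ∈ S.powerset, ((∏ i ∈ A, c i) / (Fintype.card α).descFactorial #A) • descPochhammer ℝ #A

lemma natDegree_layerPoly_le (S : Finset α) (c : α → ℝ) : (layerPoly S c).natDegree ≤ #S :=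
  natDegree_sum_le_of_forall_le _ _ fun A hA => (natDegree_smul_le _ _).trans
    ((descPochhammer_natDegree ℝ #A).trans_le (card_le_card (mem_powerset.1 hA)))

lemma sum_powersetCard_prod_one_add_ite [DecidableEq α] (S : Finset α) (c : α → ℝ) (s : ℕ) :
    ∑ T ∈ powersetCard s univ, ∏ i ∈ S, (1 + if i ∈ T then c i else 0) =
      (Fintype.card α).choose s * (layerPoly S c).eval (s : ℝ) := by
  simp_rw [prod_one_add, prod_ite_zero, ← subset_iff]
  rw [sum_comm, layerPoly, eval_finsetSum, mul_sum]
  refine sum_congr rfl fun A _ => ?_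
  rw [sum_ite, sum_const_zero, add_zero, sum_const, nsmul_eq_mul, eval_smul,
    descPochhammer_eval_eq_descFactorial, smul_eq_mul]
  have hcount : (#{T ∈ powersetCard s univ | A ⊆ T} * (Fintype.card α).descFactorial #A : ℝ) =
      (Fintype.card α).choose s * s.descFactorial #A := by
    exact_mod_cast card_filter_powersetCard_superset_mul_descFactorial A s
  have hA : ((Fintype.card α).descFactorial #A : ℝ) ≠ 0 := by
    exact_mod_cast (Nat.descFactorial_pos.2 (card_le_univ A)).ne'
  field_simp
  linear_combination (∏ i ∈ A, c i) * hcount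

end Layer

lemma pos_neg_one_pow_card_filter_neg_mul_prod {ι : Type*} (A : Finset ι) (h : ι → ℝ)
    (hA : ∀ i ∈ A, h i ≠ 0) : 0 < (-1) ^ #{i ∈ A | h i < 0} * ∏ i ∈ A, h i := by
  rw [← prod_filter_mul_prod_filter_not A (fun i => h i < 0), ← mul_assoc, ← prod_neg]
  refine mul_pos (prod_pos fun i hi => ?_) (prod_pos fun i hi => ?_)
  · exact neg_pos.2 (mem_filter.1 hi).2
  · obtain ⟨hiA, hi⟩ := mem_filter.1 hi
    exact lt_of_le_of_ne (not_lt.1 hi) (hA i hiA).symm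

lemma Polynomial.exists_isRoot_Ioo_of_eval_mul_eval_neg {Q : ℝ[X]} {a b : ℝ} (hab : a ≤ b)
    (h : Q.eval a * Q.eval b < 0) : ∃ x ∈ Set.Ioo a b, Q.IsRoot x := by
  have hQ : ContinuousOn (fun x => Q.eval x) (Set.Icc a b) := Q.continuousOn
  rcases lt_or_gt_of_ne (left_ne_zero_of_mul h.ne) with ha | ha
  · exact intermediate_value_Ioo hab hQ ⟨ha, by nlinarith⟩
  · exact intermediate_value_Ioo' hab hQ ⟨by nlinarith, ha⟩

lemma eq_neg_of_ne_of_eq_one_or_eq_neg_one {a b : ℝ} (ha : a = 1 ∨ a = -1) (hb : b = 1 ∨ b = -1)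
    (hab : a ≠ b) : b = -a := by
  rcases ha with rfl | rfl <;> rcases hb with rfl | rfl <;>
    first | exact absurd rfl hab | norm_num

noncomputable def signChanges (g : ℕ → ℝ) (n : ℕ) : Finset ℕ := {s ∈ range n | g s ≠ g (s + 1)}

section SignChanges

variable {g : ℕ → ℝ} {n : ℕ}

lemma filter_signChanges_lt {s : ℕ} (hs : s ≤ n) :
    {t ∈ signChanges g n | t < s} = signChanges g s := by
  ext t
  simp only [signChanges, mem_filter, mem_range]
  exact ⟨fun ⟨⟨_, hch⟩, hts⟩ => ⟨hts, hch⟩, fun ⟨hts, hch⟩ => ⟨⟨by omega, hch⟩, hts⟩⟩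

lemma eq_neg_one_pow_card_signChanges_mul (hg : ∀ s ≤ n, g s = 1 ∨ g s = -1) :
    ∀ s ≤ n, g s = (-1) ^ #(signChanges g s) * g 0 := by
  intro s
  induction s with
  | zero => simp [signChanges]
  | succ s ih =>
    intro hs
    rw [signChanges, range_add_one, filter_insert, ← signChanges]
    split_ifs with hch
    · rw [card_insert_of_notMem (by simp [signChanges]), pow_succ,
        eq_neg_of_ne_of_eq_one_or_eq_neg_one (hg s (by omega)) (hg (s + 1) hs) hch, ih (by omega)]
      ring
    · rw [← ih (by omega)]; exact (not_not.1 hch).symm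

lemma card_signChanges_le_natDegree (hg : ∀ s ≤ n, g s = 1 ∨ g s = -1) {Q : ℝ[X]}
    (hQ : ∀ s ≤ n, 0 < Q.eval (s : ℝ) * g s) : #(signChanges g n) ≤ Q.natDegree := by
  have hQ0 : Q ≠ 0 := by rintro rfl; simpa using hQ 0 n.zero_le
  have hroot : ∀ s ∈ signChanges g n, s ∈ Q.roots.toFinset.image Nat.floor := by
    intro s hs
    obtain ⟨hsn, hch⟩ := mem_filter.1 hs
    rw [mem_range] at hsn
    have hflip := eq_neg_of_ne_of_eq_one_or_eq_neg_one (hg s hsn.le) (hg (s + 1) hsn) hch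
    have hsq : g s * g s = 1 := by rcases hg s hsn.le with h | h <;> rw [h] <;> norm_num
    have hneg : Q.eval (s : ℝ) * Q.eval ((s : ℝ) + 1) < 0 := by
      have := mul_pos (hQ s hsn.le) (hQ (s + 1) hsn)
      push_cast at this
      rw [hflip] at this
      nlinarith
    obtain ⟨x, ⟨hsx, hxs⟩, hx⟩ := exists_isRoot_Ioo_of_eval_mul_eval_neg (by linarith) hneg
    refine mem_image.2 ⟨x, by simpa [hQ0] using hx, ?_⟩
    exact (Nat.floor_eq_iff ((Nat.cast_nonneg s).trans hsx.le)).2 ⟨hsx.le, hxs⟩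
  calc #(signChanges g n) ≤ #(Q.roots.toFinset.image Nat.floor) := card_le_card hroot
    _ ≤ #Q.roots.toFinset := card_image_le
    _ ≤ Q.roots.card := Multiset.toFinset_card_le _
    _ ≤ Q.natDegree := card_roots' Q

lemma exists_polynomial_signRep_natDegree_le (hg : ∀ s ≤ n, g s = 1 ∨ g s = -1) :
    ∃ Q : ℝ[X], Q.natDegree ≤ #(signChanges g n) ∧ ∀ s ≤ n, 0 < Q.eval (s : ℝ) * g s := by
  refine ⟨C (g 0) * ∏ t ∈ signChanges g n, (C ((t : ℝ) + 1 / 2) - X), ?_, fun s hs => ?_⟩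
  · refine (natDegree_C_mul_le _ _).trans ((natDegree_prod_le _ _).trans ?_)
    exact (sum_le_sum fun t _ => show (C ((t : ℝ) + 1 / 2) - X).natDegree ≤ 1 from
      (natDegree_sub_le _ _).trans (by simp)).trans (by simp)
  · have hne : ∀ t ∈ signChanges g n, (t : ℝ) + 1 / 2 - s ≠ 0 := fun t _ h => by
      have : ((2 * t + 1 : ℕ) : ℝ) = (2 * s : ℕ) := by push_cast; linarith
      have : 2 * t + 1 = 2 * s := by exact_mod_cast this
      omega
    have hneg : ∀ t : ℕ, (t : ℝ) + 1 / 2 - s < 0 ↔ t < s := fun t => by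
      constructor <;> intro h
      · exact_mod_cast (by linarith : (t : ℝ) < s)
      · have : (t : ℝ) + 1 ≤ s := by exact_mod_cast h
        linarith
    have hprod := pos_neg_one_pow_card_filter_neg_mul_prod _ _ hne
    simp only [hneg, filter_signChanges_lt hs] at hprod
    have hg0 : g 0 * g 0 = 1 := by rcases hg 0 n.zero_le with h | h <;> rw [h] <;> norm_num
    simp only [eval_mul, eval_C, eval_prod, eval_sub, eval_X]
    rw [eq_neg_one_pow_card_signChanges_mul hg s hs]
    linear_combination hprod -
      ((-1) ^ #(signChanges g s) * ∏ t ∈ signChanges g n, ((t : ℝ) + 1 / 2 - s)) * hg0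

theorem exists_polynomial_signRep_iff (hg : ∀ s ≤ n, g s = 1 ∨ g s = -1) (k : ℕ) :
    (∃ Q : ℝ[X], Q.natDegree ≤ k ∧ ∀ s ≤ n, 0 < Q.eval (s : ℝ) * g s) ↔
      #(signChanges g n) ≤ k := by
  refine ⟨fun ⟨Q, hQk, hQ⟩ => (card_signChanges_le_natDegree hg hQ).trans hQk, fun hk => ?_⟩
  obtain ⟨Q, hQ, hQg⟩ := exists_polynomial_signRep_natDegree_le hg
  exact ⟨Q, hQ.trans hk, hQg⟩

end SignChanges

lemma MvPolynomial.totalDegree_aeval_le {σ R : Type*} [CommSemiring R] (L : MvPolynomial σ R)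
    (Q : R[X]) : (Polynomial.aeval L Q).totalDegree ≤ Q.natDegree * L.totalDegree := by
  rw [aeval_eq_sum_range]
  refine (MvPolynomial.totalDegree_finsetSum_le fun i hi => ?_)
  refine (MvPolynomial.totalDegree_smul_le _ _).trans ((MvPolynomial.totalDegree_pow _ _).trans ?_)
  exact Nat.mul_le_mul_right _ (Nat.lt_succ_iff.1 (mem_range.1 hi))

lemma MvPolynomial.eval_polynomial_aeval {σ R : Type*} [CommSemiring R] (u : σ → R)
    (L : MvPolynomial σ R) (Q : R[X]) :
    MvPolynomial.eval u (Polynomial.aeval L Q) = Q.eval (MvPolynomial.eval u L) := by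
  simpa [MvPolynomial.coe_aeval_eq_eval, coe_aeval_eq_eval] using
    (aeval_algHom_apply (MvPolynomial.aeval u) L Q).symm

section Cube

variable {d : ℕ}

def cubePoint (T : Finset (Fin d)) : Fin d → ℝ := fun i => if i ∈ T then -1 else 1

lemma cube_cubePoint (T : Finset (Fin d)) : Cube (cubePoint T) := fun i => by
  unfold cubePoint; split_ifs <;> simp

lemma filter_cubePoint_eq_neg_one (T : Finset (Fin d)) :
    ({i | cubePoint T i = -1} : Finset (Fin d)) = T := by
  ext i; by_cases hi : i ∈ T <;> simp [cubePoint, hi]; norm_num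

lemma cubePoint_pow (T : Finset (Fin d)) (i : Fin d) (k : ℕ) :
    cubePoint T i ^ k = 1 + if i ∈ T then (-1) ^ k - 1 else 0 := by
  unfold cubePoint; split_ifs <;> ring

noncomputable def symmetrization (p : MvPolynomial (Fin d) ℝ) : ℝ[X] :=
  ∑ m ∈ p.support, p.coeff m • layerPoly m.support (fun i => (-1) ^ m i - 1)

lemma natDegree_symmetrization_le (p : MvPolynomial (Fin d) ℝ) :
    (symmetrization p).natDegree ≤ p.totalDegree := by
  refine natDegree_sum_le_of_forall_le _ _ fun m hm => (natDegree_smul_le _ _).trans ?_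
  refine (natDegree_layerPoly_le _ _).trans (le_trans ?_ (MvPolynomial.le_totalDegree hm))
  simpa [Finsupp.sum] using
    card_nsmul_le_sum m.support m 1 fun i hi =>
      Nat.one_le_iff_ne_zero.2 (Finsupp.mem_support_iff.1 hi)

lemma sum_powersetCard_eval_cubePoint (p : MvPolynomial (Fin d) ℝ) (s : ℕ) :
    ∑ T ∈ powersetCard s univ, MvPolynomial.eval (cubePoint T) p =
      d.choose s * (symmetrization p).eval (s : ℝ) := by
  simp_rw [MvPolynomial.eval_eq, cubePoint_pow]
  rw [sum_comm, symmetrization, eval_finsetSum, mul_sum]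
  refine sum_congr rfl fun m _ => ?_
  rw [← mul_sum, sum_powersetCard_prod_one_add_ite, Fintype.card_fin, eval_smul, smul_eq_mul]
  ring

noncomputable def negCount : MvPolynomial (Fin d) ℝ :=
  ∑ i, MvPolynomial.C (1 / 2) * (1 - MvPolynomial.X i)

lemma totalDegree_negCount_le : (negCount : MvPolynomial (Fin d) ℝ).totalDegree ≤ 1 := by
  refine MvPolynomial.totalDegree_finsetSum_le fun i _ => ?_
  refine (MvPolynomial.totalDegree_mul _ _).trans ?_
  simpa using (MvPolynomial.totalDegree_sub _ _).trans (by simp)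

lemma eval_negCount {u : Fin d → ℝ} (hu : Cube u) :
    MvPolynomial.eval u negCount = #{i | u i = -1} := by
  simp only [negCount, map_sum, map_mul, map_sub, map_one, MvPolynomial.eval_C, MvPolynomial.eval_X]
  rw [card_filter, Nat.cast_sum]
  refine sum_congr rfl fun i _ => ?_
  rcases hu i with h | h <;> norm_num [h]

theorem exists_mvPolynomial_signRep_iff (g : ℕ → ℝ) (k : ℕ) :
    (∃ p : MvPolynomial (Fin d) ℝ, p.totalDegree ≤ k ∧
        ∀ u, Cube u → 0 < MvPolynomial.eval u p * g #{i | u i = -1}) ↔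
      ∃ Q : ℝ[X], Q.natDegree ≤ k ∧ ∀ s ≤ d, 0 < Q.eval (s : ℝ) * g s := by
  constructor
  · rintro ⟨p, hpk, hp⟩
    refine ⟨symmetrization p, (natDegree_symmetrization_le p).trans hpk, fun s hs => ?_⟩
    have hsum : 0 < ∑ T ∈ powersetCard s univ, MvPolynomial.eval (cubePoint T) p * g s := by
      refine sum_pos (fun T hT => ?_) (powersetCard_nonempty.2 (by simpa using hs))
      have := hp (cubePoint T) (cube_cubePoint T)
      rwa [filter_cubePoint_eq_neg_one, (mem_powersetCard.1 hT).2] at this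
    rw [← sum_mul, sum_powersetCard_eval_cubePoint, mul_assoc] at hsum
    exact pos_of_mul_pos_right hsum (Nat.cast_nonneg _)
  · rintro ⟨Q, hQk, hQ⟩
    refine ⟨Polynomial.aeval negCount Q, ?_, fun u hu => ?_⟩
    · exact (MvPolynomial.totalDegree_aeval_le _ _).trans
        ((Nat.mul_le_mul_left _ totalDegree_negCount_le).trans (by simpa using hQk))
    · rw [MvPolynomial.eval_polynomial_aeval, eval_negCount hu]
      exact hQ _ ((card_le_univ _).trans_eq (Fintype.card_fin d))

end Cube

theorem thrdeg_symmetric_eq_sign_changes_general {d : ℕ}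
    (f : (Fin d → ℝ) → ℝ)
    (hval : ∀ u : Fin d → ℝ, Cube u → f u = 1 ∨ f u = -1)
    (fbar : ℕ → ℝ)
    (hbar : ∀ u : Fin d → ℝ, Cube u →
      f u = fbar (Finset.univ.filter (fun i => u i = -1)).card) :
    ∀ k : ℕ,
      (∃ p : MvPolynomial (Fin d) ℝ, p.totalDegree ≤ k ∧
          ∀ u : Fin d → ℝ, Cube u → 0 < MvPolynomial.eval u p * f u) ↔
        ((Finset.range d).filter (fun s => fbar s ≠ fbar (s + 1))).card ≤ k := by
  intro k
  have hfbar : ∀ s ≤ d, fbar s = 1 ∨ fbar s = -1 := fun s hs => by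
    obtain ⟨T, -, hT⟩ := exists_subset_card_eq (s := (univ : Finset (Fin d))) (n := s)
      (by simpa using hs)
    rw [← hT, ← filter_cubePoint_eq_neg_one T, ← hbar _ (cube_cubePoint T)]
    exact hval _ (cube_cubePoint T)
  rw [← signChanges, ← exists_polynomial_signRep_iff hfbar, ← exists_mvPolynomial_signRep_iff]
  exact exists_congr fun p => and_congr_right fun _ => forall₂_congr fun u hu => by rw [hbar u hu]

/-- The threshold degree of a symmetric Boolean function on `{−1,1}^d` equals its number
of sign changes: a polynomial of degree `≤ k` sign-representing `f` exists iff `k ≥ r`,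
where `r` is the number of `s < d` with `f̄(s) ≠ f̄(s+1)`. -/
theorem thrdeg_symmetric_eq_sign_changes {d : ℕ} (hd : 1 ≤ d)
    (f : (Fin d → ℝ) → ℝ)
    (hsym : ∀ π : Equiv.Perm (Fin d), ∀ u : Fin d → ℝ, Cube u → f (u ∘ π) = f u)
    (hval : ∀ u : Fin d → ℝ, Cube u → f u = 1 ∨ f u = -1)
    (fbar : ℕ → ℝ)
    (hbar : ∀ u : Fin d → ℝ, Cube u →
      f u = fbar (Finset.univ.filter (fun i => u i = -1)).card) :
    ∀ k : ℕ,
      (∃ p : MvPolynomial (Fin d) ℝ, p.totalDegree ≤ k ∧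
          ∀ u : Fin d → ℝ, Cube u → 0 < MvPolynomial.eval u p * f u) ↔
        ((Finset.range d).filter (fun s => fbar s ≠ fbar (s + 1))).card ≤ k :=
  thrdeg_symmetric_eq_sign_changes_general f hval fbar hbar
end

section
/- Let d ≥ 1 and let g be a function defined on the cube {−1,1}^d with values in {−1,0,1} that is not identically zero on the cube. Then there exists a polynomial p ∈ MvPolynomial (Fin d) ℝ with totalDegree p ≤ d − 1 such that for every cube point u the sign of p(u) equals g(u) (that is, p(u) > 0 if g(u) = 1, p(u) < 0 if g(u) = −1, and p(u) = 0 if g(u) = 0), if and only if there exist cube points u and v with g(u)·parity(u) > 0 and g(v)·parity(v) < 0. -/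
open Finset MvPolynomial

theorem exists_pos_and_neg_of_sum_eq_zero {ι M : Type*} [AddCommGroup M] [LinearOrder M]
    [IsOrderedAddMonoid M] {s : Finset ι} {f : ι → M} (hsum : ∑ i ∈ s, f i = 0)
    (hne : ∃ i ∈ s, f i ≠ 0) : (∃ i ∈ s, 0 < f i) ∧ ∃ j ∈ s, f j < 0 := by
  obtain ⟨i, hi, hfi⟩ := hne
  refine ⟨exists_pos_of_sum_zero_of_exists_nonzero f hsum ⟨i, hi, hfi⟩, ?_⟩
  obtain ⟨j, hj, hfj⟩ := exists_pos_of_sum_zero_of_exists_nonzero (fun i => -f i)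
    (by rw [sum_neg_distrib, hsum, neg_zero]) ⟨i, hi, neg_ne_zero.mpr hfi⟩
  exact ⟨j, hj, neg_pos.mp hfj⟩

theorem exists_pos_weights_sum_mul_eq_zero {ι : Type*} {s : Finset ι} {x : ι → ℝ}
    (hpos : ∃ a ∈ s, 0 < x a) (hneg : ∃ b ∈ s, x b < 0) :
    ∃ w : ι → ℝ, (∀ i, 0 < w i) ∧ ∑ i ∈ s, w i * x i = 0 := by
  classical
  obtain ⟨a, ha, hxa⟩ := hpos
  obtain ⟨b, hb, hxb⟩ := hneg
  set S := ∑ i ∈ s, x i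
  -- raising the weight of `a` by `S⁻ / x a` and that of `b` by `S⁺ / -x b` shifts the sum by `-S`
  have hxb' : 0 < -x b := neg_pos.mpr hxb
  refine ⟨fun i => 1 + (if i = a then S⁻ / x a else 0) + (if i = b then S⁺ / -x b else 0),
    fun i => by dsimp only; split_ifs <;> positivity, ?_⟩
  simp only [add_mul, ite_mul, zero_mul, one_mul, sum_add_distrib, sum_ite_eq', ha, hb, if_true,
    div_mul_cancel₀ _ hxa.ne', div_neg, neg_mul, div_mul_cancel₀ _ hxb.ne]
  linarith [posPart_sub_negPart S]

namespace Real

theorem sign_eq_self {x : ℝ} (hx : x = -1 ∨ x = 0 ∨ x = 1) : sign x = x := by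
  rcases hx with rfl | rfl | rfl
  · exact sign_of_neg neg_one_lt_zero
  · exact sign_zero
  · exact sign_one

theorem sign_mul_of_pos_left {w : ℝ} (hw : 0 < w) (x : ℝ) : sign (w * x) = sign x := by
  rcases lt_trichotomy x 0 with hx | rfl | hx
  · rw [sign_of_neg hx, sign_of_neg (mul_neg_of_pos_of_neg hw hx)]
  · simp
  · rw [sign_of_pos hx, sign_of_pos (mul_pos hw hx)]

theorem sign_mul_pos_iff {x y : ℝ} : 0 < sign x * y ↔ 0 < x * y := by
  rcases lt_trichotomy x 0 with hx | rfl | hx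
  · simp [sign_of_neg hx, mul_pos_iff, hx, hx.not_gt]
  · simp
  · simp [sign_of_pos hx, hx]

theorem sign_mul_neg_iff {x y : ℝ} : sign x * y < 0 ↔ x * y < 0 := by
  rcases lt_trichotomy x 0 with hx | rfl | hx
  · simp [sign_of_neg hx, mul_neg_iff, hx, hx.not_gt]
  · simp
  · simp [sign_of_pos hx, mul_neg_iff, hx, hx.not_gt]

end Real

namespace Cube

variable {d : ℕ}

noncomputable def finset (d : ℕ) : Finset (Fin d → ℝ) := Fintype.piFinset fun _ => {1, -1}

theorem mem_finset {u : Fin d → ℝ} : u ∈ Cube.finset d ↔ Cube u := by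
  simp [Cube.finset, Cube]

theorem sum_prod_pow_succ_eq_zero {m : Fin d → ℕ} {i : Fin d} (hi : m i = 0) :
    ∑ u ∈ Cube.finset d, ∏ j, u j ^ (m j + 1) = 0 := by
  refine (sum_prod_piFinset {1, -1} fun j (t : ℝ) => t ^ (m j + 1)).trans ?_
  exact prod_eq_zero (mem_univ i) (by simp [hi, sum_pair (show (1 : ℝ) ≠ -1 by norm_num)])

theorem sum_prod_mul_eval_eq_zero {p : MvPolynomial (Fin d) ℝ} (hp : p.totalDegree < d) :
    ∑ u ∈ Cube.finset d, (∏ i, u i) * eval u p = 0 := by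
  simp_rw [eval_eq', mul_sum]
  rw [sum_comm]
  refine sum_eq_zero fun m hm => ?_
  have hdeg : ∑ i, m i < ∑ _i : Fin d, 1 := by
    simpa [Finsupp.sum_fintype] using (le_totalDegree hm).trans_lt hp
  obtain ⟨i, -, hi⟩ := exists_lt_of_sum_lt hdeg
  calc ∑ u ∈ Cube.finset d, (∏ j, u j) * (coeff m p * ∏ j, u j ^ m j)
      = coeff m p * ∑ u ∈ Cube.finset d, ∏ j, u j ^ (m j + 1) := by
        rw [mul_sum]
        refine sum_congr rfl fun u _ => ?_
        simp only [pow_succ, prod_mul_distrib]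
        ring
    _ = 0 := by rw [sum_prod_pow_succ_eq_zero (Nat.lt_one_iff.mp hi), mul_zero]

theorem prod_ne_zero {u : Fin d → ℝ} (hu : Cube u) : ∏ i, u i ≠ 0 :=
  prod_ne_zero_iff.mpr fun i _ => by rcases hu i with h | h <;> simp [h]

theorem prod_one_add_mul_eq_ite {u b : Fin d → ℝ} (hu : Cube u) (hb : Cube b) :
    ∏ i, (1 + b i * u i) = if u = b then 2 ^ d else 0 := by
  split_ifs with h
  · subst h
    rw [prod_congr rfl fun i _ => ?_, prod_const, card_univ, Fintype.card_fin]
    rcases hu i with h | h <;> rw [h] <;> norm_num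
  · obtain ⟨i, hi⟩ := Function.ne_iff.mp h
    refine prod_eq_zero (mem_univ i) ?_
    rcases hu i with h1 | h1 <;> rcases hb i with h2 | h2 <;> simp_all

noncomputable def truncIndicator (b : Fin d → ℝ) : MvPolynomial (Fin d) ℝ :=
  ∏ i, (1 + C (b i) * X i) - ∏ i, C (b i) * X i

theorem totalDegree_truncIndicator_le (b : Fin d → ℝ) :
    (truncIndicator b).totalDegree ≤ d - 1 := by
  have hexp : truncIndicator b = ∑ t ∈ univ.powerset.erase univ, ∏ i ∈ t, C (b i) * X i := by
    rw [truncIndicator, prod_one_add, ← add_sum_erase _ _ (mem_powerset_self univ),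
      add_sub_cancel_left]
  rw [hexp]
  refine (totalDegree_finsetSum _ _).trans (Finset.sup_le fun t ht => ?_)
  have hcard : t.card < d := by
    simpa using card_lt_card (ssubset_univ_iff.mpr (ne_of_mem_erase ht))
  calc (∏ i ∈ t, C (b i) * X i).totalDegree
      ≤ ∑ i ∈ t, (C (b i) * X i).totalDegree := totalDegree_finsetProd _ _
    _ ≤ ∑ _i ∈ t, 1 := by
        gcongr with i
        exact (totalDegree_mul _ _).trans (by simp [totalDegree_X])
    _ ≤ d - 1 := by simp only [sum_const, smul_eq_mul, mul_one]; omega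

theorem eval_truncIndicator {u b : Fin d → ℝ} (hu : Cube u) (hb : Cube b) :
    eval u (truncIndicator b) = (if u = b then 2 ^ d else 0) - (∏ i, b i) * ∏ i, u i := by
  simp [truncIndicator, prod_one_add_mul_eq_ite hu hb, prod_mul_distrib]

theorem exists_totalDegree_le_eval_eq {f : (Fin d → ℝ) → ℝ}
    (hf : ∑ u ∈ Cube.finset d, (∏ i, u i) * f u = 0) :
    ∃ p : MvPolynomial (Fin d) ℝ, p.totalDegree ≤ d - 1 ∧ ∀ u, Cube u → eval u p = f u := by
  refine ⟨∑ b ∈ Cube.finset d, C (f b / 2 ^ d) * truncIndicator b, ?_, fun u hu => ?_⟩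
  · refine (totalDegree_finsetSum _ _).trans (Finset.sup_le fun b _ => ?_)
    exact (totalDegree_mul _ _).trans (by simpa using totalDegree_truncIndicator_le b)
  · calc eval u (∑ b ∈ Cube.finset d, C (f b / 2 ^ d) * truncIndicator b)
        = ∑ b ∈ Cube.finset d,
            f b / 2 ^ d * ((if u = b then 2 ^ d else 0) - (∏ i, b i) * ∏ i, u i) := by
          simp only [map_sum, map_mul, eval_C]
          exact sum_congr rfl fun b hb => by rw [eval_truncIndicator hu (mem_finset.mp hb)]
      _ = f u - (∑ b ∈ Cube.finset d, (∏ i, b i) * f b) * (∏ i, u i) / 2 ^ d := by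
          simp only [mul_sub, sum_sub_distrib, mul_ite, mul_zero, sum_ite_eq,
            mem_finset.mpr hu, if_true, sum_mul, sum_div]
          congr 1
          · field_simp
          · exact sum_congr rfl fun b _ => by ring
      _ = f u := by rw [hf]; simp

end Cube

/-- A nonzero sign pattern `g` on the cube `{−1,1}^d` is realized by a polynomial of
total degree at most `d − 1` iff `g` agrees with parity somewhere and disagrees with
parity somewhere (on the points where it is nonzero). -/
theorem sign_pattern_degree_le_pred {d : ℕ} (hd : 1 ≤ d)
    (g : (Fin d → ℝ) → ℝ)
    (hval : ∀ u : Fin d → ℝ, Cube u → g u = -1 ∨ g u = 0 ∨ g u = 1)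
    (hnz : ∃ u : Fin d → ℝ, Cube u ∧ g u ≠ 0) :
    (∃ p : MvPolynomial (Fin d) ℝ, p.totalDegree ≤ d - 1 ∧
        ∀ u : Fin d → ℝ, Cube u → Real.sign (MvPolynomial.eval u p) = g u) ↔
      ((∃ u : Fin d → ℝ, Cube u ∧ 0 < g u * ∏ i, u i) ∧
        (∃ v : Fin d → ℝ, Cube v ∧ g v * ∏ i, v i < 0)) := by
  constructor
  · rintro ⟨p, hdeg, hsign⟩
    obtain ⟨u, hu, hgu⟩ := hnz
    have hu0 : (∏ i, u i) * eval u p ≠ 0 :=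
      mul_ne_zero (Cube.prod_ne_zero hu) fun h => hgu (by rw [← hsign u hu, h, Real.sign_zero])
    obtain ⟨⟨a, ha, hpos⟩, ⟨b, hb, hneg⟩⟩ := exists_pos_and_neg_of_sum_eq_zero
      (Cube.sum_prod_mul_eval_eq_zero (by omega : p.totalDegree < d))
      ⟨u, Cube.mem_finset.mpr hu, hu0⟩
    rw [Cube.mem_finset] at ha hb
    exact ⟨⟨a, ha, by rwa [← hsign a ha, Real.sign_mul_pos_iff, mul_comm]⟩,
      ⟨b, hb, by rwa [← hsign b hb, Real.sign_mul_neg_iff, mul_comm]⟩⟩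
  · rintro ⟨⟨u, hu, hgu⟩, ⟨v, hv, hgv⟩⟩
    obtain ⟨w, hw, hsum⟩ := exists_pos_weights_sum_mul_eq_zero (s := Cube.finset d)
      (x := fun u => g u * ∏ i, u i) ⟨u, Cube.mem_finset.mpr hu, hgu⟩
      ⟨v, Cube.mem_finset.mpr hv, hgv⟩
    obtain ⟨p, hdeg, heval⟩ := Cube.exists_totalDegree_le_eval_eq (f := fun u => w u * g u)
      (by rw [← hsum]; exact sum_congr rfl fun u _ => by ring)
    refine ⟨p, hdeg, fun u hu => ?_⟩
    rw [heval u hu, Real.sign_mul_of_pos_left (hw u), Real.sign_eq_self (hval u hu)]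
end

section
/- Let F be a finite field with q elements, d a natural number, and V an F-vector space of dimension d equipped with a linear order ⊴. Then the number of (d+1)-tuples (g_0, g_1, …, g_d) of points of V such that the affine span of {g_0,…,g_d} over F is all of V and, for every j ∈ {0,…,d}, g_j ⊴ v for every point v of the affine span of {g_j, g_{j+1}, …, g_d}, equals ∏_{j=1}^{d} (q^j − 1). (This counts the maximal paths in the flag DAG T_d; it is the top Betti number β_{d,†} of the class of linear functionals over F.) -/
set_option linter.unusedSectionVars false

open AffineSubspace Set Module

section Aux

variable {F V : Type} [Field F] [Fintype F] [AddCommGroup V] [Module F V]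
  [Fintype V] [LinearOrder V]

private lemma fd : FiniteDimensional F V := (Module.finite_iff_finite (R := F)).mpr inferInstance

private lemma succ_image_Ici {n : ℕ} (i : Fin (n + 1)) :
    Fin.succ '' Set.Ici i = Set.Ici i.succ := by
  ext k
  simp only [Set.mem_image, Set.mem_Ici]
  constructor
  · rintro ⟨m, hm, rfl⟩; exact Fin.succ_le_succ_iff.mpr hm
  · intro hk
    have hk0 : k ≠ 0 := by
      rintro rfl
      have := Fin.le_def.mp hk
      simp at this
    refine ⟨k.pred hk0, ?_, Fin.succ_pred _ _⟩
    rw [Fin.le_def] at hk ⊢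
    simp only [Fin.val_succ, Fin.coe_pred] at hk ⊢
    omega

private lemma image_Ici_succ {n : ℕ} (g : Fin (n + 2) → V) (i : Fin (n + 1)) :
    g '' Set.Ici i.succ = Fin.tail g '' Set.Ici i := by
  show _ = (g ∘ Fin.succ) '' Set.Ici i
  rw [Set.image_comp, succ_image_Ici]

end Aux

section Count

variable {F V : Type} [Field F] [Fintype F] [AddCommGroup V] [Module F V]
  [Fintype V] [LinearOrder V]

open Submodule LinearMap in
private lemma card_hyp {n : ℕ} (A : AffineSubspace F V) {a₀ : V} (ha₀ : a₀ ∈ A)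
    (hdim : Module.finrank F A.direction = n + 1) :
    Nat.card {H : AffineSubspace F V //
        H ≤ A ∧ a₀ ∉ H ∧ (H : Set V).Nonempty ∧ Module.finrank F H.direction = n} =
      Fintype.card F ^ (n + 1) - 1 := by
  classical
  haveI : FiniteDimensional F V := fd
  set D := A.direction with hD
  -- choice of a vector on which a nonzero functional takes value 1
  have exists_unit : ∀ φ : Module.Dual F D, φ ≠ 0 → ∃ u : D, φ u = 1 := by
    intro φ hφ
    obtain ⟨x, hx⟩ := DFunLike.ne_iff.mp hφ
    have hx0 : φ x ≠ 0 := by simpa using hx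
    exact ⟨(φ x)⁻¹ • x, by rw [map_smul, smul_eq_mul]; exact inv_mul_cancel₀ hx0⟩
  obtain ⟨c, hc⟩ : ∃ c : {φ : Module.Dual F D // φ ≠ 0} → D,
      ∀ φ : {φ : Module.Dual F D // φ ≠ 0}, φ.1 (c φ) = 1 :=
    ⟨fun φ => Classical.choose (exists_unit φ.1 φ.2),
     fun φ => Classical.choose_spec (exists_unit φ.1 φ.2)⟩
  -- the map from nonzero functionals to hyperplanes
  have hle : ∀ φ : {φ : Module.Dual F D // φ ≠ 0},
      AffineSubspace.mk' ((c φ : V) +ᵥ a₀) ((ker φ.1).map D.subtype) ≤ A := by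
    intro φ x hx
    rw [AffineSubspace.mem_mk'] at hx
    obtain ⟨y, -, hyx⟩ := Submodule.mem_map.mp hx
    have hx' : x = ((y : V) + (c φ : V)) +ᵥ a₀ := by
      have : x -ᵥ ((c φ : V) +ᵥ a₀) = (y : V) := hyx.symm
      rw [vsub_vadd_eq_vsub_sub] at this
      simp only [vsub_eq_sub] at this
      simp only [vadd_eq_add]
      linear_combination (norm := abel) this
    rw [hx']
    exact AffineSubspace.vadd_mem_of_mem_direction (D.add_mem y.2 (c φ).2) ha₀
  have hnot : ∀ φ : {φ : Module.Dual F D // φ ≠ 0},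
      a₀ ∉ AffineSubspace.mk' ((c φ : V) +ᵥ a₀) ((ker φ.1).map D.subtype) := by
    intro φ h
    rw [AffineSubspace.mem_mk'] at h
    obtain ⟨y, hy, hyx⟩ := Submodule.mem_map.mp h
    have hveq : a₀ -ᵥ ((c φ : V) +ᵥ a₀) = ((-(c φ) : D) : V) := by
      simp [vsub_eq_sub, vadd_eq_add]
    have : y = -(c φ) := Subtype.coe_injective (hyx.trans hveq)
    subst this
    have : φ.1 (-(c φ)) = 0 := hy
    rw [map_neg, hc φ] at this
    exact one_ne_zero (neg_eq_zero.mp this)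
  have hrank : ∀ φ : {φ : Module.Dual F D // φ ≠ 0},
      Module.finrank F (AffineSubspace.mk' ((c φ : V) +ᵥ a₀)
        ((ker φ.1).map D.subtype)).direction = n := by
    intro φ
    rw [AffineSubspace.direction_mk']
    rw [← (Submodule.equivMapOfInjective D.subtype D.injective_subtype
        (ker φ.1)).finrank_eq]
    have hsurj : Function.Surjective φ.1 := by
      intro a
      exact ⟨a • c φ, by rw [map_smul, hc φ, smul_eq_mul, mul_one]⟩
    have h1 : Module.finrank F (LinearMap.range φ.1) = 1 := by
      rw [LinearMap.range_eq_top.mpr hsurj, finrank_top, Module.finrank_self]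
    have h2 := LinearMap.finrank_range_add_finrank_ker φ.1
    rw [h1, hdim] at h2
    omega
  set f : {φ : Module.Dual F D // φ ≠ 0} → {H : AffineSubspace F V //
      H ≤ A ∧ a₀ ∉ H ∧ (H : Set V).Nonempty ∧ Module.finrank F H.direction = n} :=
    fun φ => ⟨AffineSubspace.mk' ((c φ : V) +ᵥ a₀) ((ker φ.1).map D.subtype),
      hle φ, hnot φ, ⟨_, AffineSubspace.self_mem_mk' _ _⟩, hrank φ⟩ with hf
  have hinj : Function.Injective f := by
    rintro φ ψ h
    have h' : AffineSubspace.mk' ((c φ : V) +ᵥ a₀) ((ker φ.1).map D.subtype) =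
        AffineSubspace.mk' ((c ψ : V) +ᵥ a₀) ((ker ψ.1).map D.subtype) :=
      congrArg Subtype.val h
    have hdir := congrArg AffineSubspace.direction h'
    rw [AffineSubspace.direction_mk', AffineSubspace.direction_mk'] at hdir
    have hker : ker φ.1 = ker ψ.1 :=
      Submodule.map_injective_of_injective D.injective_subtype hdir
    have hpt : ((c φ : V) +ᵥ a₀) ∈ AffineSubspace.mk' ((c ψ : V) +ᵥ a₀)
        ((ker ψ.1).map D.subtype) := h' ▸ AffineSubspace.self_mem_mk' _ _
    rw [AffineSubspace.mem_mk'] at hpt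
    have hveq : ((c φ : V) +ᵥ a₀) -ᵥ ((c ψ : V) +ᵥ a₀) = ((c φ - c ψ : D) : V) := by
      simp [vsub_eq_sub, vadd_eq_add]
    rw [hveq] at hpt
    obtain ⟨y, hy, hyx⟩ := Submodule.mem_map.mp hpt
    have : y = c φ - c ψ := Subtype.coe_injective hyx
    subst this
    have hker2 : ψ.1 (c φ - c ψ) = 0 := hy
    have hψcφ : ψ.1 (c φ) = 1 := by
      rw [map_sub, hc ψ] at hker2
      exact sub_eq_zero.mp hker2
    apply Subtype.ext
    apply LinearMap.ext
    intro x
    have hx : x - (φ.1 x) • c φ ∈ ker φ.1 := by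
      rw [LinearMap.mem_ker, map_sub, map_smul, hc φ, smul_eq_mul, mul_one, sub_self]
    rw [hker, LinearMap.mem_ker, map_sub, map_smul, hψcφ, smul_eq_mul, mul_one,
      sub_eq_zero] at hx
    exact hx.symm
  have hsurj : Function.Surjective f := by
    rintro ⟨H, hHle, hHnot, ⟨h₀, hh₀⟩, hHrank⟩
    have hsub : H.direction ≤ D := AffineSubspace.direction_le hHle
    set W₀ := H.direction.comap D.subtype with hW₀
    have hmap : W₀.map D.subtype = H.direction := by
      rw [hW₀, Submodule.map_comap_subtype]
      exact inf_eq_right.mpr hsub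
    have hri : Module.finrank F W₀ = n := by
      rw [← hHrank, ← hmap]
      exact (Submodule.equivMapOfInjective D.subtype D.injective_subtype W₀).finrank_eq
    set u₀ : D := ⟨h₀ -ᵥ a₀, AffineSubspace.vsub_mem_direction (hHle hh₀) ha₀⟩ with hu₀def
    have hu₀ : u₀ ∉ W₀ := by
      intro h
      apply hHnot
      have h2 : (h₀ -ᵥ a₀) ∈ H.direction := h
      have := AffineSubspace.vadd_mem_of_mem_direction (H.direction.neg_mem h2) hh₀
      rwa [show -(h₀ -ᵥ a₀) +ᵥ h₀ = a₀ by simp [vsub_eq_sub, vadd_eq_add]] at this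
    have hq1 : Module.finrank F (D ⧸ W₀) = 1 := by
      have := Submodule.finrank_quotient_add_finrank W₀
      rw [hri, hdim] at this
      omega
    have hv : W₀.mkQ u₀ ≠ 0 := by
      rw [Submodule.mkQ_apply, ne_eq, Submodule.Quotient.mk_eq_zero]
      exact hu₀
    have hspan : Submodule.span F {W₀.mkQ u₀} = ⊤ :=
      (finrank_eq_one_iff_of_nonzero _ hv).mp hq1
    let e : F ≃ₗ[F] (D ⧸ W₀) :=
      (LinearEquiv.toSpanNonzeroSingleton F _ _ hv).trans (LinearEquiv.ofTop _ hspan)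
    set φ : Module.Dual F D := (e.symm : (D ⧸ W₀) →ₗ[F] F).comp W₀.mkQ with hφdef
    have hφu₀ : φ u₀ = 1 := by
      have h1 : e 1 = W₀.mkQ u₀ := by
        show (LinearEquiv.ofTop _ hspan) ((LinearEquiv.toSpanNonzeroSingleton F _ _ hv) 1) = _
        rw [LinearEquiv.toSpanNonzeroSingleton_one]
        rfl
      show e.symm (W₀.mkQ u₀) = 1
      rw [← h1, LinearEquiv.symm_apply_apply]
    have hker : ker φ = W₀ := by
      ext x
      rw [hφdef, LinearMap.mem_ker, LinearMap.comp_apply, LinearEquiv.coe_coe,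
        LinearEquiv.map_eq_zero_iff, Submodule.mkQ_apply, Submodule.Quotient.mk_eq_zero]
    have hφ : φ ≠ 0 := fun h => one_ne_zero (α := F) (by rw [← hφu₀, h]; rfl)
    refine ⟨⟨φ, hφ⟩, ?_⟩
    apply Subtype.ext
    show AffineSubspace.mk' ((c ⟨φ, hφ⟩ : V) +ᵥ a₀) ((ker φ).map D.subtype) = H
    have hdir : (AffineSubspace.mk' ((c ⟨φ, hφ⟩ : V) +ᵥ a₀)
        ((ker φ).map D.subtype)).direction = H.direction := by
      rw [AffineSubspace.direction_mk', hker, hmap]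
    apply AffineSubspace.ext_of_direction_eq hdir
    refine ⟨(c ⟨φ, hφ⟩ : V) +ᵥ a₀, AffineSubspace.self_mem_mk' _ _, ?_⟩
    set u := c ⟨φ, hφ⟩ with hu
    have h1 : φ (u - u₀) = 0 := by
      rw [map_sub, hφu₀, hc ⟨φ, hφ⟩, sub_self]
    have h2 : ((u - u₀ : D) : V) ∈ H.direction := by
      rw [← hmap]
      have hm : u - u₀ ∈ W₀ := hker ▸ (LinearMap.mem_ker.mpr h1)
      exact Submodule.mem_map_of_mem (f := D.subtype) hm
    have h3 : (u : V) +ᵥ a₀ = ((u - u₀ : D) : V) +ᵥ h₀ := by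
      push_cast [hu₀def]
      simp only [vadd_eq_add, vsub_eq_sub]
      abel
    rw [h3]
    exact AffineSubspace.vadd_mem_of_mem_direction h2 hh₀
  rw [← Nat.card_eq_of_bijective f ⟨hinj, hsurj⟩]
  haveI : Finite (Module.Dual F D) :=
    Finite.of_injective (fun φ => (φ : D → F)) DFunLike.coe_injective
  letI : Fintype (Module.Dual F D) := Fintype.ofFinite _
  rw [Nat.card_eq_fintype_card]
  have h1 : Fintype.card {φ : Module.Dual F D // φ ≠ 0} =
      Fintype.card (Module.Dual F D) - 1 := by
    simp only [ne_eq]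
    rw [Fintype.card_subtype_compl, Fintype.card_subtype_eq]
  rw [h1, card_eq_pow_finrank (K := F), Subspace.dual_finrank_eq, hdim]

end Count

section Main

variable {F V : Type} [Field F] [Fintype F] [AddCommGroup V] [Module F V]
  [Fintype V] [LinearOrder V]

private lemma card_good :
    ∀ (n : ℕ) (A : AffineSubspace F V), (A : Set V).Nonempty →
      Module.finrank F A.direction = n →
      Nat.card {g : Fin (n + 1) → V //
          affineSpan F (Set.range g) = A ∧
          ∀ j : Fin (n + 1), ∀ v ∈ affineSpan F (g '' Set.Ici j), g j ≤ v} =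
        ∏ j ∈ Finset.range n, (Fintype.card F ^ (j + 1) - 1) := by
  haveI : FiniteDimensional F V := fd
  intro n
  induction n with
  | zero =>
    rintro A ⟨a, ha⟩ hdim
    have hsing : ∀ x ∈ A, x = a := by
      intro x hx
      have hbot : A.direction = ⊥ := Submodule.finrank_eq_zero.mp hdim
      have h2 := AffineSubspace.vsub_mem_direction hx ha
      rw [hbot, Submodule.mem_bot] at h2
      exact vsub_eq_zero_iff_eq.mp h2
    have hset : ∀ g : Fin 1 → V,
        (affineSpan F (Set.range g) = A ∧
          ∀ j : Fin 1, ∀ v ∈ affineSpan F (g '' Set.Ici j), g j ≤ v) ↔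
        g = fun _ => a := by
      intro g
      constructor
      · rintro ⟨hspan, -⟩
        funext j
        have hj : j = 0 := Subsingleton.elim j 0
        have hg0 : g 0 ∈ A := by
          rw [← hspan]
          exact subset_affineSpan F _ (Set.mem_range_self 0)
        rw [hj]
        exact hsing _ hg0
      · rintro rfl
        have hspan : affineSpan F (Set.range fun _ : Fin 1 => a) = A := by
          apply le_antisymm
          · exact affineSpan_le.mpr (by rintro x ⟨i, rfl⟩; exact ha)
          · intro x hx
            have : x = a := hsing x hx
            rw [this]
            exact subset_affineSpan F _ ⟨0, rfl⟩
        refine ⟨hspan, fun j v hv => ?_⟩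
        have hvA : v ∈ A := by
          have hle : affineSpan F ((fun _ : Fin 1 => a) '' Set.Ici j) ≤ A := by
            rw [← hspan]
            exact affineSpan_mono F (Set.image_subset_range _ _)
          exact hle hv
        rw [hsing v hvA]
    rw [Finset.prod_range_zero]
    rw [Nat.card_eq_one_iff_unique]
    constructor
    · exact ⟨fun g h => Subtype.ext (((hset g.1).mp g.2).trans ((hset h.1).mp h.2).symm)⟩
    · exact ⟨⟨fun _ => a, (hset _).mpr rfl⟩⟩
  | succ n IH =>
    intro A hA hdim
    obtain ⟨a₀, ha₀, hmin'⟩ := Set.exists_min_image (A : Set V) id (Set.toFinite _) hA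
    have hmin : ∀ v ∈ A, a₀ ≤ v := fun v hv => hmin' v hv
    -- the least element of the span of the whole tuple is `g 0`
    have key0 : ∀ g : Fin (n + 2) → V,
        affineSpan F (Set.range g) = A →
        (∀ j : Fin (n + 2), ∀ v ∈ affineSpan F (g '' Set.Ici j), g j ≤ v) →
        g 0 = a₀ := by
      intro g hspan hm
      have hg0A : g 0 ∈ A := hspan ▸ subset_affineSpan F _ (Set.mem_range_self 0)
      have h1 : ∀ v ∈ A, g 0 ≤ v := by
        intro v hv
        apply hm 0
        have hsub : affineSpan F (Set.range g) ≤ affineSpan F (g '' Set.Ici 0) :=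
          affineSpan_mono F (by rintro x ⟨i, rfl⟩; exact ⟨i, Fin.zero_le i, rfl⟩)
        exact hsub (by rwa [hspan])
      exact le_antisymm (h1 a₀ ha₀) (hmin (g 0) hg0A)
    -- spanning: adding the least point to a good hyperplane recovers `A`
    have hspan_insert : ∀ H : AffineSubspace F V,
        H ≤ A → a₀ ∉ H → (H : Set V).Nonempty → Module.finrank F H.direction = n →
        affineSpan F (insert a₀ (H : Set V)) = A := by
      rintro H hle hnot ⟨h₁, hh₁⟩ hrk
      have hdirins := AffineSubspace.direction_affineSpan_insert (k := F) (p₂ := a₀) hh₁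
      have hnotmem : a₀ -ᵥ h₁ ∉ H.direction := fun h =>
        hnot (by have := AffineSubspace.vadd_mem_of_mem_direction h hh₁;
                 rwa [vsub_vadd] at this)
      have hlt : H.direction < Submodule.span F {a₀ -ᵥ h₁} ⊔ H.direction :=
        lt_of_le_of_ne le_sup_right (fun h => hnotmem (by
          rw [h]
          exact Submodule.mem_sup_left (Submodule.mem_span_singleton_self _)))
      have hge : n + 1 ≤ Module.finrank F
          (Submodule.span F {a₀ -ᵥ h₁} ⊔ H.direction : Submodule F V) := by
        have h2 := Submodule.finrank_lt_finrank_of_lt hlt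
        omega
      have hle2 : (affineSpan F (insert a₀ (H : Set V))).direction ≤ A.direction := by
        apply AffineSubspace.direction_le
        exact affineSpan_le.mpr (Set.insert_subset ha₀ hle)
      have hdirs : (affineSpan F (insert a₀ (H : Set V))).direction = A.direction := by
        apply Submodule.eq_of_le_of_finrank_le hle2
        rw [hdim, hdirins]
        exact hge
      exact AffineSubspace.ext_of_direction_eq hdirs
        ⟨a₀, subset_affineSpan F _ (Set.mem_insert _ _), ha₀⟩
    -- the tail of a good tuple spans a good hyperplane
    have keyH : ∀ g : Fin (n + 2) → V,
        affineSpan F (Set.range g) = A →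
        (∀ j : Fin (n + 2), ∀ v ∈ affineSpan F (g '' Set.Ici j), g j ≤ v) →
        (affineSpan F (Set.range (Fin.tail g)) ≤ A ∧
          a₀ ∉ affineSpan F (Set.range (Fin.tail g)) ∧
          ((affineSpan F (Set.range (Fin.tail g)) : Set V).Nonempty ∧
          Module.finrank F (affineSpan F (Set.range (Fin.tail g))).direction = n)) := by
      intro g hspan hm
      have h0 := key0 g hspan hm
      set H := affineSpan F (Set.range (Fin.tail g)) with hH
      have hrange : Set.range (Fin.tail g) ⊆ Set.range g := by
        rintro x ⟨i, rfl⟩; exact ⟨i.succ, rfl⟩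
      have hle : H ≤ A := hspan ▸ affineSpan_mono F hrange
      have hne : (H : Set V).Nonempty :=
        ⟨Fin.tail g 0, subset_affineSpan F _ (Set.mem_range_self 0)⟩
      have hdimle : Module.finrank F H.direction ≤ n := by
        rw [hH, direction_affineSpan]
        exact finrank_vectorSpan_range_le F (Fin.tail g) (by simp)
      have hnot : a₀ ∉ H := by
        intro hmem
        have hrange2 : Set.range g ⊆ (H : Set V) := by
          rw [Fin.range_fin_succ]
          exact Set.insert_subset (h0 ▸ hmem) (subset_affineSpan F _)
        have hAH : A = H := le_antisymm (hspan ▸ affineSpan_le.mpr hrange2) hle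
        rw [hAH] at hdim
        omega
      have hdimge : n ≤ Module.finrank F H.direction := by
        have hA' : affineSpan F (insert a₀ (H : Set V)) = A := by
          apply le_antisymm
          · exact affineSpan_le.mpr (Set.insert_subset ha₀ hle)
          · calc A = affineSpan F (Set.range g) := hspan.symm
              _ ≤ affineSpan F (insert a₀ (H : Set V)) := affineSpan_mono F (by
                  rw [Fin.range_fin_succ, h0]
                  exact Set.insert_subset_insert (subset_affineSpan F _))
        obtain ⟨h₁, hh₁⟩ := hne
        have hdirins := AffineSubspace.direction_affineSpan_insert (k := F) (p₂ := a₀) hh₁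
        rw [hA'] at hdirins
        have hne1 : a₀ -ᵥ h₁ ≠ 0 := by
          rw [vsub_ne_zero]
          rintro rfl
          exact hnot hh₁
        have h2 := Submodule.finrank_sup_add_finrank_inf_eq
          (Submodule.span F {a₀ -ᵥ h₁}) H.direction
        have h3 : Module.finrank F (Submodule.span F {a₀ -ᵥ h₁}) = 1 :=
          finrank_span_singleton hne1
        rw [← hdirins, hdim, h3] at h2
        omega
      exact ⟨hle, hnot, hne, le_antisymm hdimle hdimge⟩
    -- transfer of minimality conditions along `Fin.tail`
    have tailmin : ∀ g : Fin (n + 2) → V,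
        (∀ j : Fin (n + 2), ∀ v ∈ affineSpan F (g '' Set.Ici j), g j ≤ v) →
        ∀ i : Fin (n + 1), ∀ v ∈ affineSpan F (Fin.tail g '' Set.Ici i),
          Fin.tail g i ≤ v := by
      intro g hm i v hv
      exact hm i.succ v (by rwa [image_Ici_succ g i])
    -- properties of `Fin.cons a₀ g'`
    have inv_spec : ∀ H : AffineSubspace F V, H ≤ A → a₀ ∉ H → (H : Set V).Nonempty →
        Module.finrank F H.direction = n →
        ∀ g' : Fin (n + 1) → V, affineSpan F (Set.range g') = H →
        (∀ j : Fin (n + 1), ∀ v ∈ affineSpan F (g' '' Set.Ici j), g' j ≤ v) →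
        affineSpan F (Set.range (Fin.cons a₀ g' : Fin (n + 2) → V)) = A ∧
          ∀ j : Fin (n + 2), ∀ v ∈ affineSpan F ((Fin.cons a₀ g' : Fin (n + 2) → V) ''
            Set.Ici j), (Fin.cons a₀ g' : Fin (n + 2) → V) j ≤ v := by
      intro H hle hnot hne hrk g' hg'span hg'min
      have hsp : affineSpan F (Set.range (Fin.cons a₀ g' : Fin (n + 2) → V)) = A := by
        rw [Fin.range_cons]
        have h2 : affineSpan F (insert a₀ (Set.range g')) =
            affineSpan F (insert a₀ (H : Set V)) := by
          rw [Set.insert_eq, Set.insert_eq, AffineSubspace.span_union,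
            AffineSubspace.span_union, hg'span, AffineSubspace.affineSpan_coe]
        rw [h2]
        exact hspan_insert H hle hnot hne hrk
      refine ⟨hsp, fun j => ?_⟩
      refine Fin.cases ?_ ?_ j
      · intro v hv
        have hvA : v ∈ A :=
          (le_trans (affineSpan_mono F (Set.image_subset_range _ _)) (le_of_eq hsp)) hv
        simpa using hmin v hvA
      · intro i v hv
        rw [image_Ici_succ] at hv
        have htail : Fin.tail (Fin.cons a₀ g' : Fin (n + 2) → V) = g' := by
          funext k
          exact Fin.cons_succ (α := fun _ : Fin (n + 2) => V) a₀ g' k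
        rw [htail] at hv
        simpa [Fin.cons_succ] using hg'min i v hv
    -- the equivalence
    let e : {g : Fin (n + 2) → V //
        affineSpan F (Set.range g) = A ∧
        ∀ j : Fin (n + 2), ∀ v ∈ affineSpan F (g '' Set.Ici j), g j ≤ v} ≃
      (Σ H : {H : AffineSubspace F V //
          H ≤ A ∧ a₀ ∉ H ∧ ((H : Set V).Nonempty ∧
            Module.finrank F H.direction = n)},
        {g' : Fin (n + 1) → V //
          affineSpan F (Set.range g') = H.1 ∧
          ∀ j : Fin (n + 1), ∀ v ∈ affineSpan F (g' '' Set.Ici j), g' j ≤ v}) :=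
    { toFun := fun g =>
        ⟨⟨affineSpan F (Set.range (Fin.tail g.1)), keyH g.1 g.2.1 g.2.2⟩,
          ⟨Fin.tail g.1, rfl, tailmin g.1 g.2.2⟩⟩
      invFun := fun p =>
        ⟨Fin.cons a₀ p.2.1, inv_spec p.1.1 p.1.2.1 p.1.2.2.1 p.1.2.2.2.1 p.1.2.2.2.2
          p.2.1 p.2.2.1 p.2.2.2⟩
      left_inv := fun g => Subtype.ext (by
        have h0 := key0 g.1 g.2.1 g.2.2
        show Fin.cons a₀ (Fin.tail g.1) = g.1
        rw [← h0]
        exact Fin.cons_self_tail g.1)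
      right_inv := fun p => by
        obtain ⟨⟨H, hQ⟩, ⟨g', hg'⟩⟩ := p
        have hcomp : Fin.tail (Fin.cons a₀ g' : Fin (n + 2) → V) = g' := by
          funext k
          exact Fin.cons_succ (α := fun _ : Fin (n + 2) => V) a₀ g' k
        have h1 : affineSpan F (Set.range (Fin.tail (Fin.cons a₀ g' : Fin (n + 2) → V))) = H := by
          rw [hcomp]; exact hg'.1
        apply Sigma.ext
        · exact Subtype.ext h1
        · refine (Subtype.heq_iff_coe_eq ?_).mpr hcomp
          intro x
          simp only [hcomp, h1, show affineSpan F (Set.range g') = H from hg'.1] }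
    rw [Nat.card_congr e]
    haveI : Finite (AffineSubspace F V) :=
      Finite.of_injective (fun s => (s : Set V)) SetLike.coe_injective
    letI : Fintype {H : AffineSubspace F V //
        H ≤ A ∧ a₀ ∉ H ∧ ((H : Set V).Nonempty ∧
          Module.finrank F H.direction = n)} := Fintype.ofFinite _
    letI : ∀ H : {H : AffineSubspace F V //
        H ≤ A ∧ a₀ ∉ H ∧ ((H : Set V).Nonempty ∧
          Module.finrank F H.direction = n)},
        Fintype {g' : Fin (n + 1) → V //
          affineSpan F (Set.range g') = H.1 ∧
          ∀ j : Fin (n + 1), ∀ v ∈ affineSpan F (g' '' Set.Ici j), g' j ≤ v} :=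
      fun H => Fintype.ofFinite _
    rw [Nat.card_eq_fintype_card, Fintype.card_sigma]
    have hfib : ∀ H : {H : AffineSubspace F V //
        H ≤ A ∧ a₀ ∉ H ∧ ((H : Set V).Nonempty ∧
          Module.finrank F H.direction = n)},
        Fintype.card {g' : Fin (n + 1) → V //
          affineSpan F (Set.range g') = H.1 ∧
          ∀ j : Fin (n + 1), ∀ v ∈ affineSpan F (g' '' Set.Ici j), g' j ≤ v} =
        ∏ j ∈ Finset.range n, (Fintype.card F ^ (j + 1) - 1) := fun H => by
      rw [← Nat.card_eq_fintype_card]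
      exact IH H.1 H.2.2.2.1 H.2.2.2.2
    rw [Finset.sum_congr rfl (fun H _ => hfib H), Finset.sum_const, Finset.card_univ,
      smul_eq_mul]
    have hH : Fintype.card {H : AffineSubspace F V //
        H ≤ A ∧ a₀ ∉ H ∧ ((H : Set V).Nonempty ∧
          Module.finrank F H.direction = n)} = Fintype.card F ^ (n + 1) - 1 := by
      rw [← Nat.card_eq_fintype_card]
      exact card_hyp (n := n) A ha₀ hdim
    rw [hH, Finset.prod_range_succ, mul_comm]

end Main

/-- The number of `(d+1)`-tuples of points of a `d`-dimensional vector space `V` over a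
finite field `F` with `q` elements, affinely spanning `V` and such that each `g_j` is the
`⊴`-least point of the affine span of `{g_j, …, g_d}`, equals `∏_{j=1}^{d} (q^j − 1)`. -/
theorem count_flag_paths (F : Type) [Field F] [Fintype F] (q : ℕ)
    (hq : Fintype.card F = q) (d : ℕ) (V : Type) [AddCommGroup V] [Module F V]
    [Fintype V] [LinearOrder V] (hdim : Module.finrank F V = d) :
    Nat.card {g : Fin (d + 1) → V //
        affineSpan F (Set.range g) = ⊤ ∧
        ∀ j : Fin (d + 1), ∀ v ∈ affineSpan F (g '' Set.Ici j), g j ≤ v} =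
      ∏ j ∈ Finset.range d, (q ^ (j + 1) - 1) := by
  subst hq
  exact card_good d ⊤ ⟨0, trivial⟩
    (by rw [AffineSubspace.direction_top, finrank_top, hdim])
end

section
/- Let F be a finite field with q elements, d a natural number, and V an F-vector space of dimension d equipped with a linear order ⊴. Suppose g_1, …, g_k ∈ V are pairwise distinct and, for each i ∈ {1,…,k}, g_i ⊴ v for every point v of the affine span of {g_i, g_{i+1}, …, g_k} over F. Then there exists a (d+1)-tuple (f_0, …, f_d) of points of V such that the affine span of {f_0,…,f_d} is all of V, f_j ⊴ v for every point v of the affine span of {f_j,…,f_d} for every j, and (g_1,…,g_k) is a subsequence of (f_0,…,f_d): there is a strictly increasing map ι : {1,…,k} → {0,…,d} with f_{ι(i)} = g_i for all i. -/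
/-!
Induct on the dimension of an affine subspace `B` containing the `g i`, starting from `B = V`.
Let `m` be the least point of `B`; drop `g 0` if it equals `m`. Every remaining `g i` is then
`> m`, so `m` is not in their affine span (a point of that span is `≥` the first of them). Hence
the span lies in a hyperplane `B'` of `B` avoiding `m`: extend inside `B'` by induction and
prepend `m`. As `B'` has codimension one and `m ∉ B'`, the new sequence spans `B`, and `m` is
the least point of that span.
-/

open Module Set

variable {F V P : Type*} [Field F] [AddCommGroup V] [Module F V] [AddTorsor V P]

theorem Submodule.exists_le_notMem_finrank_add_one [FiniteDimensional F V]
    {D W : Submodule F V} (hDW : D ≤ W) {v : V} (hvW : v ∈ W) (hvD : v ∉ D) :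
    ∃ W' : Submodule F V, D ≤ W' ∧ W' ≤ W ∧ v ∉ W' ∧
      finrank F W' + 1 = finrank F W := by
  obtain ⟨φ, hφv, hφD⟩ := exists_dual_map_eq_bot_of_notMem hvD inferInstance
  have hvW' : v ∉ W ⊓ LinearMap.ker φ := fun h => hφv h.2
  refine ⟨W ⊓ LinearMap.ker φ, le_inf hDW (LinearMap.le_ker_iff_map.2 hφD), inf_le_left, hvW',
    ?_⟩
  have hlt : finrank F ↥(W ⊓ LinearMap.ker φ) < finrank F W :=
    finrank_lt_finrank_of_lt (lt_of_le_of_ne inf_le_left fun h => hvW' (h.symm ▸ hvW))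
  have hW : W ≤ W ⊓ LinearMap.ker φ ⊔ F ∙ v := by
    intro w hw
    have hker : w - (φ w / φ v) • v ∈ W ⊓ LinearMap.ker φ :=
      ⟨W.sub_mem hw (W.smul_mem _ hvW), by simp [div_mul_cancel₀ _ hφv]⟩
    simpa using add_mem_sup hker (smul_mem _ (φ w / φ v) (mem_span_singleton_self v))
  have hle := (finrank_mono hW).trans (finrank_add_le_finrank_add_finrank _ _)
  have hv0 : v ≠ 0 := by rintro rfl; exact hvD D.zero_mem
  have := finrank_span_singleton (K := F) hv0
  omega

namespace AffineSubspace

variable [FiniteDimensional F V]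

theorem exists_le_notMem_finrank_add_one_of_nonempty {B : AffineSubspace F P} {m : P}
    (hm : m ∈ B) {S : Set P} (hSB : S ⊆ B) (hS : S.Nonempty) (hmS : m ∉ affineSpan F S) :
    ∃ B' ≤ B, (B' : Set P).Nonempty ∧ S ⊆ B' ∧ m ∉ B' ∧
      finrank F B'.direction + 1 = finrank F B.direction := by
  obtain ⟨s, hs⟩ := hS
  have hsA : s ∈ affineSpan F S := subset_affineSpan F S hs
  have hsB : s ∈ B := hSB hs
  obtain ⟨W', hAW', hW'B, hmW', hrk⟩ := Submodule.exists_le_notMem_finrank_add_one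
    (direction_le (affineSpan_le.2 hSB)) (vsub_mem_direction hm hsB)
    (fun h => hmS ((vsub_right_mem_direction_iff_mem hsA m).1 h))
  refine ⟨mk' s W', fun x hx => ?_, ⟨s, self_mem_mk' s W'⟩, fun x hx => ?_, hmW',
    by rwa [direction_mk']⟩
  · exact (vsub_right_mem_direction_iff_mem hsB x).1 (hW'B hx)
  · exact hAW' (vsub_mem_direction (subset_affineSpan F S hx) hsA)

theorem exists_le_notMem_finrank_add_one {B : AffineSubspace F P} {m : P} (hm : m ∈ B)
    (hB : 0 < finrank F B.direction) {S : Set P} (hSB : S ⊆ B) (hmS : m ∉ affineSpan F S) :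
    ∃ B' ≤ B, (B' : Set P).Nonempty ∧ S ⊆ B' ∧ m ∉ B' ∧
      finrank F B'.direction + 1 = finrank F B.direction := by
  obtain ⟨s, hsB, hms⟩ : ∃ s ∈ B, m ∉ affineSpan F (insert s S) := by
    rcases S.eq_empty_or_nonempty with rfl | ⟨s, hs⟩
    · obtain ⟨v, hv, hv0⟩ := Submodule.exists_mem_ne_zero_of_ne_bot
        fun h => hB.ne' (Submodule.finrank_eq_zero.2 h)
      refine ⟨v +ᵥ m, vadd_mem_of_mem_direction hv hm, ?_⟩
      rw [insert_empty_eq, mem_affineSpan_singleton]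
      intro h
      exact hv0 (by simpa using congrArg (· -ᵥ m) h.symm)
    · exact ⟨s, hSB hs, by rwa [insert_eq_of_mem hs]⟩
  obtain ⟨B', hB'B, hB', hsB', hmB', hrk⟩ := exists_le_notMem_finrank_add_one_of_nonempty hm
    (insert_subset hsB hSB) (insert_nonempty s S) hms
  exact ⟨B', hB'B, hB', (subset_insert s S).trans hsB', hmB', hrk⟩

theorem affineSpan_insert_eq_of_finrank_add_one {B' B : AffineSubspace F P} (hB'B : B' ≤ B)
    (hB' : (B' : Set P).Nonempty) {m : P} (hm : m ∈ B) (hmB' : m ∉ B')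
    (hrk : finrank F B'.direction + 1 = finrank F B.direction) :
    affineSpan F (insert m (B' : Set P)) = B := by
  obtain ⟨p, hp⟩ := hB'
  have hle : affineSpan F (insert m (B' : Set P)) ≤ B := affineSpan_le.2 (insert_subset hm hB'B)
  refine eq_of_direction_eq_of_nonempty_of_le ?_
    ((affineSpan_nonempty F).2 (insert_nonempty _ _)) hle
  refine Submodule.eq_of_le_of_finrank_le (direction_le hle) ?_
  rw [direction_affineSpan_insert hp]
  have hlt : B'.direction < (F ∙ (m -ᵥ p)) ⊔ B'.direction :=
    lt_of_le_of_ne le_sup_right fun h => hmB' ((vsub_right_mem_direction_iff_mem hp m).1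
      (h ▸ Submodule.mem_sup_left (Submodule.mem_span_singleton_self _)))
  have := Submodule.finrank_lt_finrank_of_lt hlt
  omega

end AffineSubspace

theorem Fin.image_Ici_zero {α : Type*} {n : ℕ} (f : Fin (n + 1) → α) :
    f '' Ici 0 = range f := by
  rw [← image_univ]
  exact congrArg _ (eq_univ_of_forall Fin.zero_le)

theorem Fin.image_cons_Ici_succ {α : Type*} {n : ℕ} (a : α) (f : Fin n → α) (i : Fin n) :
    (Fin.cons a f : Fin (n + 1) → α) '' Ici i.succ = f '' Ici i := by
  rw [← Fin.image_succ_Ici, ← image_comp]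
  rfl

variable (F) in
def IsFlagPath [LE P] {n : ℕ} (f : Fin n → P) : Prop :=
  ∀ i, ∀ p ∈ affineSpan F (f '' Ici i), f i ≤ p

namespace IsFlagPath

variable {n : ℕ}

theorem of_cons [LE P] {a : P} {f : Fin n → P}
    (h : IsFlagPath F (Fin.cons a f : Fin (n + 1) → P)) : IsFlagPath F f := fun i p hp => by
  simpa using h i.succ p (by rwa [Fin.image_cons_Ici_succ])

theorem cons [LE P] {a : P} {f : Fin n → P} (hf : IsFlagPath F f)
    (ha : ∀ p ∈ affineSpan F (insert a (range f)), a ≤ p) :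
    IsFlagPath F (Fin.cons a f : Fin (n + 1) → P) := by
  intro i
  induction i using Fin.cases with
  | zero => simpa [Fin.image_Ici_zero, Fin.range_cons] using ha
  | succ j => simpa [Fin.image_cons_Ici_succ] using hf j

theorem apply_zero_le [LE P] {f : Fin (n + 1) → P} (hf : IsFlagPath F f) {p : P}
    (hp : p ∈ affineSpan F (range f)) : f 0 ≤ p :=
  hf 0 p (by rwa [Fin.image_Ici_zero])

theorem notMem_affineSpan_range_of_lt [Preorder P] {f : Fin n → P} (hf : IsFlagPath F f)
    {p : P} (hp : ∀ i, p < f i) : p ∉ affineSpan F (range f) := by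
  cases n with
  | zero => simp [range_eq_empty, AffineSubspace.notMem_bot]
  | succ n => exact fun h => (hp 0).not_ge (hf.apply_zero_le h)

theorem cons_of_le [FiniteDimensional F V] [Preorder P] {f : Fin n → P} (hf : IsFlagPath F f)
    {B' B : AffineSubspace F P} (hf' : affineSpan F (range f) = B') (hB'B : B' ≤ B)
    (hB' : (B' : Set P).Nonempty) (hrk : finrank F B'.direction + 1 = finrank F B.direction)
    {m : P} (hm : m ∈ B) (hmB' : m ∉ B') (hmin : ∀ p ∈ B, m ≤ p) :
    affineSpan F (range (Fin.cons m f : Fin (n + 1) → P)) = B ∧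
      IsFlagPath F (Fin.cons m f : Fin (n + 1) → P) := by
  have hspan : affineSpan F (range (Fin.cons m f : Fin (n + 1) → P)) = B := by
    rw [Fin.range_cons, ← affineSpan_insert_affineSpan, hf']
    exact AffineSubspace.affineSpan_insert_eq_of_finrank_add_one hB'B hB' hm hmB' hrk
  refine ⟨hspan, hf.cons fun p hp => hmin p ?_⟩
  rwa [← Fin.range_cons, hspan] at hp

end IsFlagPath

theorem exists_isFlagPath_extension_of_finrank_eq_zero [FiniteDimensional F V] [Preorder P]
    {B : AffineSubspace F P} (hB : (B : Set P).Nonempty) (hrk : finrank F B.direction = 0)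
    {k : ℕ} {g : Fin k → P} (hinj : Function.Injective g) (hgB : ∀ i, g i ∈ B) :
    ∃ f : Fin 1 → P, affineSpan F (range f) = B ∧ IsFlagPath F f ∧
      ∃ ι : Fin k → Fin 1, StrictMono ι ∧ ∀ i, f (ι i) = g i := by
  obtain ⟨p, hp⟩ := hB
  have hBp : affineSpan F {p} = B := AffineSubspace.eq_of_direction_eq_of_nonempty_of_le
    (by rw [direction_affineSpan, vectorSpan_singleton, eq_comm, ← Submodule.finrank_eq_zero,
      hrk])
    (by simp) (affineSpan_le.2 (singleton_subset_iff.2 hp))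
  have hB : ∀ q ∈ B, q = p := fun q hq => by
    rwa [← hBp, AffineSubspace.mem_affineSpan_singleton] at hq
  refine ⟨fun _ => p, by rwa [range_const], fun _ q hq => (hB q ?_).ge, fun _ => 0,
    fun i j hij => absurd (hinj ((hB _ (hgB i)).trans (hB _ (hgB j)).symm)) hij.ne,
    fun i => (hB _ (hgB i)).symm⟩
  rw [← hBp]
  exact affineSpan_mono F ((image_subset_range _ _).trans range_const_subset) hq

theorem exists_isFlagPath_extension [FiniteDimensional F V] [Finite P] [LinearOrder P] (n : ℕ)
    {B : AffineSubspace F P} (hB : (B : Set P).Nonempty) (hrk : finrank F B.direction = n)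
    {k : ℕ} {g : Fin k → P} (hinj : Function.Injective g) (hg : IsFlagPath F g)
    (hgB : ∀ i, g i ∈ B) :
    ∃ f : Fin (n + 1) → P, affineSpan F (range f) = B ∧ IsFlagPath F f ∧
      ∃ ι : Fin k → Fin (n + 1), StrictMono ι ∧ ∀ i, f (ι i) = g i := by
  induction n generalizing B k g with
  | zero => exact exists_isFlagPath_extension_of_finrank_eq_zero hB hrk hinj hgB
  | succ n ih =>
    obtain ⟨m, hmB, hmin⟩ : ∃ m ∈ B, ∀ p ∈ B, m ≤ p :=
      exists_min_image (B : Set P) id (toFinite _) hB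
    have extend : ∀ {k} {g : Fin k → P}, Function.Injective g → IsFlagPath F g →
        (∀ i, g i ∈ B) → (∀ i, m < g i) →
        ∃ f : Fin (n + 1) → P, affineSpan F (range (Fin.cons m f : Fin (n + 2) → P)) = B ∧
          IsFlagPath F (Fin.cons m f : Fin (n + 2) → P) ∧
          ∃ ι : Fin k → Fin (n + 1), StrictMono ι ∧ ∀ i, f (ι i) = g i := by
      intro k g hinj hg hgB hmg
      obtain ⟨B', hB'B, hB', hgB', hmB', hrk'⟩ := B.exists_le_notMem_finrank_add_one hmB
        (by omega) (range_subset_iff.2 hgB) (hg.notMem_affineSpan_range_of_lt hmg)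
      obtain ⟨f, hf, hfpath, hι⟩ := ih hB' (by omega) hinj hg fun i => hgB' (mem_range_self i)
      obtain ⟨hspan, hpath⟩ := hfpath.cons_of_le hf hB'B hB' (by omega) hmB hmB' hmin
      exact ⟨f, hspan, hpath, hι⟩
    by_cases hm : ∃ i, g i = m
    · obtain ⟨i, hi⟩ := hm
      obtain ⟨k, rfl⟩ := Nat.exists_eq_add_one_of_ne_zero i.pos.ne'
      have hg0 : g 0 = m :=
        le_antisymm (hi ▸ hg.apply_zero_le (subset_affineSpan F _ (mem_range_self i)))
          (hmin _ (hgB 0))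
      have hmt : ∀ j : Fin k, m < g j.succ := fun j =>
        (hmin _ (hgB j.succ)).lt_of_ne fun h => Fin.succ_ne_zero j (hinj (h.symm.trans hg0.symm))
      rw [← Fin.cons_self_tail g, hg0] at hinj hg hgB ⊢
      obtain ⟨f, hspan, hpath, ι, hι, hfι⟩ :=
        extend (Fin.cons_injective_iff.1 hinj).2 hg.of_cons (fun j => hgB j.succ) hmt
      refine ⟨_, hspan, hpath, Fin.cons 0 (Fin.succ ∘ ι), ?_, ?_⟩
      · exact Fin.strictMono_cons.2 ⟨fun j => Fin.succ_pos _, Fin.strictMono_succ.comp hι⟩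
      · exact Fin.cases rfl fun j => by simpa using hfι j
    · simp only [not_exists] at hm
      obtain ⟨f, hspan, hpath, ι, hι, hfι⟩ :=
        extend hinj hg hgB fun i => (hmin _ (hgB i)).lt_of_ne (Ne.symm (hm i))
      exact ⟨_, hspan, hpath, Fin.succ ∘ ι, Fin.strictMono_succ.comp hι,
        by simpa using hfι⟩

theorem flag_path_extension_general (F : Type) [Field F] (d : ℕ) (V : Type) [AddCommGroup V]
    [Module F V] [Fintype V] [LinearOrder V] (hdim : Module.finrank F V = d)
    (k : ℕ) (g : Fin k → V) (hinj : Function.Injective g)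
    (hleast : ∀ i : Fin k, ∀ v ∈ affineSpan F (g '' Set.Ici i), g i ≤ v) :
    ∃ f : Fin (d + 1) → V,
      affineSpan F (Set.range f) = ⊤ ∧
      (∀ j : Fin (d + 1), ∀ v ∈ affineSpan F (f '' Set.Ici j), f j ≤ v) ∧
      ∃ ι : Fin k → Fin (d + 1), StrictMono ι ∧ ∀ i, f (ι i) = g i :=
  exists_isFlagPath_extension (B := ⊤) d ⟨0, trivial⟩
    (by rw [AffineSubspace.direction_top, finrank_top, hdim]) hinj hleast fun _ => trivial

/-- Path-extension lemma for the flag DAG: any sequence `g_1, …, g_k` of pairwise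
distinct points of a `d`-dimensional vector space over a finite field, each `g_i` being
the `⊴`-least point of the affine span of `{g_i, …, g_k}`, extends to a maximal such
sequence `f_0, …, f_d` affinely spanning the whole space and containing `g` as a
subsequence. -/
theorem flag_path_extension (F : Type) [Field F] [Fintype F] (q : ℕ)
    (hq : Fintype.card F = q) (d : ℕ) (V : Type) [AddCommGroup V] [Module F V]
    [Fintype V] [LinearOrder V] (hdim : Module.finrank F V = d)
    (k : ℕ) (g : Fin k → V) (hinj : Function.Injective g)
    (hleast : ∀ i : Fin k, ∀ v ∈ affineSpan F (g '' Set.Ici i), g i ≤ v) :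
    ∃ f : Fin (d + 1) → V,
      affineSpan F (Set.range f) = ⊤ ∧
      (∀ j : Fin (d + 1), ∀ v ∈ affineSpan F (f '' Set.Ici j), f j ≤ v) ∧
      ∃ ι : Fin k → Fin (d + 1), StrictMono ι ∧ ∀ i, f (ι i) = g i :=
  flag_path_extension_general F d V hdim k g hinj hleast
end
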